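/- arXiv:2202.09255 — 13 statements merged into one kernel-verified Lean document; each statement's English description precedes it below -/
import Mathlib

section
/- Let δ be a singular cardinal with cofinality λ. Then there exists a distributivity matrix (on ℕ) of height δ if and only if there exists a distributivity matrix of height λ. -/
/-! Heights of distributivity matrices only matter up to cofinality: a matrix of height `μ` can be
reindexed along any monotone map `f` from the ordinals below `ν` to those below `μ` with cofinal
range, since refinement is transitive and a common refinement of the `A (f ξ)` refines every `A η`.
A strictly increasing cofinal map `f` from `cof μ` into `μ` has such a map going back,
`η ↦ min {ξ | η ≤ f ξ}`, whose range is cofinal because it sends `f ξ` to `ξ`. -/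

/-- `b ⊆* a`: `b \ a` is finite. -/
def AlmostSubset (b a : Set ℕ) : Prop := (b \ a).Finite

/-- A mad family on ℕ: a maximal almost disjoint family of infinite subsets of ℕ. -/
def IsMadFamily (A : Set (Set ℕ)) : Prop :=
  (∀ a ∈ A, a.Infinite) ∧
  (A.Pairwise fun a a' => (a ∩ a').Finite) ∧
  (∀ b : Set ℕ, b.Infinite → ∃ a ∈ A, (b ∩ a).Infinite)

/-- `B` refines `A`: every element of `B` is almost included in some element of `A`. -/
def Refines (B A : Set (Set ℕ)) : Prop := ∀ b ∈ B, ∃ a ∈ A, AlmostSubset b a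

/-- A distributivity matrix of height `lam`: a refining system of mad families
indexed by the ordinals below `lam`, without common (mad) refinement. -/
def IsDistribMatrix (lam : Ordinal) (A : Ordinal → Set (Set ℕ)) : Prop :=
  (∀ ξ < lam, IsMadFamily (A ξ)) ∧
  (∀ ξ η : Ordinal, ξ ≤ η → η < lam → Refines (A η) (A ξ)) ∧
  ¬ ∃ B : Set (Set ℕ), IsMadFamily B ∧ ∀ ξ < lam, Refines B (A ξ)

open Set

def IsMonotoneCofinal (ν μ : Ordinal) (f : Ordinal → Ordinal) : Prop :=
  MonotoneOn f (Iio ν) ∧ MapsTo f (Iio ν) (Iio μ) ∧ ∀ η < μ, ∃ ξ < ν, η ≤ f ξ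

theorem AlmostSubset.trans {c b a : Set ℕ} (hcb : AlmostSubset c b) (hba : AlmostSubset b a) :
    AlmostSubset c a :=
  (hcb.union hba).subset (sdiff_triangle c b a)

theorem Refines.trans {C B A : Set (Set ℕ)} (hCB : Refines C B) (hBA : Refines B A) :
    Refines C A := by
  intro c hc
  obtain ⟨b, hb, hcb⟩ := hCB c hc
  obtain ⟨a, ha, hba⟩ := hBA b hb
  exact ⟨a, ha, hcb.trans hba⟩

theorem IsDistribMatrix.comp {μ ν : Ordinal} {A : Ordinal → Set (Set ℕ)} {f : Ordinal → Ordinal}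
    (hA : IsDistribMatrix μ A) (hf : IsMonotoneCofinal ν μ f) : IsDistribMatrix ν (A ∘ f) := by
  obtain ⟨hmad, hrefines, hno_refinement⟩ := hA
  obtain ⟨hmono, hmaps, hcofinal⟩ := hf
  refine ⟨fun ξ hξ => hmad _ (hmaps hξ), fun ξ η hξη hη => ?_, ?_⟩
  · exact hrefines _ _ (hmono (hξη.trans_lt hη) hη hξη) (hmaps hη)
  · rintro ⟨B, hB, hBA⟩
    refine hno_refinement ⟨B, hB, fun η hη => ?_⟩
    obtain ⟨ξ, hξ, hηf⟩ := hcofinal η hη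
    exact (hBA ξ hξ).trans (hrefines η (f ξ) hηf (hmaps hξ))

theorem exists_strictMonoOn_isMonotoneCofinal {μ ν : Ordinal} (h : μ.cof.ord = ν) :
    ∃ f, StrictMonoOn f (Iio ν) ∧ IsMonotoneCofinal ν μ f := by
  obtain ⟨g, hg⟩ := Ordinal.exists_isFundamentalSeq h
  let f : Ordinal → Ordinal := fun ξ => if hξ : ξ < ν then g ⟨ξ, hξ⟩ else 0
  have hf : ∀ ξ (hξ : ξ < ν), f ξ = g ⟨ξ, hξ⟩ := fun ξ hξ => dif_pos hξ
  have hstrict : StrictMonoOn f (Iio ν) := fun ξ hξ η hη hξη => by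
    rw [hf ξ hξ, hf η hη]
    exact hg.strictMono hξη
  refine ⟨f, hstrict, hstrict.monotoneOn, fun ξ hξ => by rw [hf ξ hξ]; exact (g _).2, ?_⟩
  intro η hη
  obtain ⟨_, ⟨ξ, rfl⟩, hle⟩ := hg.isCofinal_range ⟨η, hη⟩
  exact ⟨ξ, ξ.2, by rw [hf ξ ξ.2]; exact hle⟩

theorem IsMonotoneCofinal.exists_reverse {μ ν : Ordinal} {f : Ordinal → Ordinal}
    (hf : IsMonotoneCofinal ν μ f) (hstrict : StrictMonoOn f (Iio ν)) :
    ∃ g, IsMonotoneCofinal μ ν g := by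
  obtain ⟨-, hmaps, hcofinal⟩ := hf
  let above : Ordinal → Set Ordinal := fun η => {ξ | ξ < ν ∧ η ≤ f ξ}
  have habove : ∀ η < μ, (above η).Nonempty := fun η hη => hcofinal η hη
  refine ⟨fun η => sInf (above η), fun η hη ζ hζ hηζ => ?_, fun η hη => (csInf_mem (habove η hη)).1,
    fun ξ hξ => ⟨f ξ, hmaps hξ, ?_⟩⟩
  · exact csInf_le_csInf (OrderBot.bddBelow _) (habove ζ hζ) fun ξ hξ => ⟨hξ.1, hηζ.trans hξ.2⟩
  · refine le_csInf ⟨ξ, hξ, le_rfl⟩ fun ζ ⟨hζ, hfζ⟩ => ?_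
    by_contra! hζξ
    exact (hstrict hζ hξ hζξ).not_ge hfζ

theorem distribMatrix_height_singular_iff_cof_general (d lam : Cardinal)
    (hcof : d.ord.cof = lam) :
    (∃ A : Ordinal → Set (Set ℕ), IsDistribMatrix d.ord A) ↔
      (∃ A : Ordinal → Set (Set ℕ), IsDistribMatrix lam.ord A) := by
  obtain ⟨f, hstrict, hf⟩ := exists_strictMonoOn_isMonotoneCofinal (congrArg Cardinal.ord hcof)
  obtain ⟨g, hg⟩ := hf.exists_reverse hstrict
  exact ⟨fun ⟨A, hA⟩ => ⟨A ∘ f, hA.comp hf⟩, fun ⟨A, hA⟩ => ⟨A ∘ g, hA.comp hg⟩⟩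

/-- If `d` is a singular cardinal with cofinality `lam`, then there is a
distributivity matrix of height `d` iff there is one of height `lam`. -/
theorem distribMatrix_height_singular_iff_cof (d lam : Cardinal)
    (hinf : Cardinal.aleph0 ≤ d) (hsing : ¬ d.IsRegular)
    (hcof : d.ord.cof = lam) :
    (∃ A : Ordinal → Set (Set ℕ), IsDistribMatrix d.ord A) ↔
      (∃ A : Ordinal → Set (Set ℕ), IsDistribMatrix lam.ord A) :=
  distribMatrix_height_singular_iff_cof_general d lam hcof
end

section
/- If λ is a regular cardinal with λ > 2^{ℵ₀}, then there is no distributivity matrix (on ℕ) of height λ. -/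
/-- A set covered by the union of a set and a finite set, modulo an infinite set... helper:
if `s` is infinite, `u` is finite and `s ⊆ t ∪ u`, then `t` is infinite. -/
lemma infinite_of_subset_union {s t u : Set ℕ} (hs : s.Infinite) (hu : u.Finite)
    (hsub : s ⊆ t ∪ u) : t.Infinite := by
  by_contra ht
  rw [Set.not_infinite] at ht
  exact hs ((ht.union hu).subset hsub)

/-- The "equal mod finite" setoid on sets of naturals. -/
def eqvModFin : Setoid (Set ℕ) where
  r a b := (a \ b).Finite ∧ (b \ a).Finite
  iseqv := by
    constructor
    · intro a; simp
    · intro a b h; exact ⟨h.2, h.1⟩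
    · intro a b c hab hbc
      constructor
      · exact ((hab.1.union hbc.1).subset (by intro x hx; by_cases hb : x ∈ b <;> simp_all))
      · exact ((hbc.2.union hab.2).subset (by intro x hx; by_cases hb : x ∈ b <;> simp_all))

/-- A canonical representative of the class of `a` mod finite. -/
noncomputable def repModFin (a : Set ℕ) : Set ℕ :=
  (Quotient.mk eqvModFin a).out

lemma repModFin_eqv (a : Set ℕ) : eqvModFin (repModFin a) a :=
  Quotient.mk_out a

lemma repModFin_eq {a b : Set ℕ} (h : eqvModFin a b) : repModFin a = repModFin b := by
  unfold repModFin
  rw [Quotient.sound h]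

/-- Pigeonhole: a `Set ℕ`-valued function on the ordinals below `lam.ord` is
constant on a cofinal set, provided `lam` is regular and above the continuum. -/
lemma pigeon (lam : Cardinal) (hreg : lam.IsRegular) (hlt : Cardinal.continuum < lam)
    (f : Ordinal → Set ℕ) :
    ∃ a : Set ℕ, ∀ β < lam.ord, ∃ ξ, β ≤ ξ ∧ ξ < lam.ord ∧ f ξ = a := by
  by_contra h
  push_neg at h
  choose g hg1 hg2 using h
  have hcard : Cardinal.lift (Cardinal.mk (Set ℕ)) < lam.ord.cof := by
    rw [Cardinal.mk_set, Cardinal.mk_nat, Cardinal.two_power_aleph0,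
      Cardinal.lift_continuum, hreg.cof_eq]
    exact hlt
  have hsup : (⨆ a, g a) < lam.ord := Ordinal.iSup_lt_ord_lift hcard hg1
  exact hg2 (f (⨆ a, g a)) (⨆ a, g a) (Ordinal.le_iSup g (f (⨆ a, g a))) hsup rfl

/-- If `lam` is a regular cardinal larger than the continuum, then there is no
distributivity matrix of height `lam`. -/
theorem no_distribMatrix_of_regular_gt_continuum (lam : Cardinal)
    (hreg : lam.IsRegular) (hlt : Cardinal.continuum < lam) :
    ¬ ∃ A : Ordinal → Set (Set ℕ), IsDistribMatrix lam.ord A := by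
  rintro ⟨A, hmad, href, hno⟩
  apply hno
  have hord_pos : (0 : Ordinal) < lam.ord := by
    rw [← Cardinal.ord_zero]
    exact Cardinal.ord_lt_ord.mpr hreg.pos
  -- the collection of sets appearing at cofinally many levels of the matrix
  set C : Set (Set ℕ) := {a | ∀ β < lam.ord, ∃ ξ, β ≤ ξ ∧ ξ < lam.ord ∧ a ∈ A ξ} with hC
  -- every element of `C` is almost contained in a member of every level
  have hCrefine : ∀ a ∈ C, ∀ ξ < lam.ord, ∃ a' ∈ A ξ, AlmostSubset a a' := by
    intro a ha ξ hξ
    obtain ⟨η, hξη, hη, haη⟩ := ha ξ hξ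
    exact href ξ η hξη hη a haη
  -- every element of `C` is infinite
  have hCinf : ∀ a ∈ C, a.Infinite := by
    intro a ha
    obtain ⟨ξ, _, hξ, haξ⟩ := ha 0 hord_pos
    exact (hmad ξ hξ).1 a haξ
  -- elements of `C` with infinite intersection are almost contained in each other
  have hCkey : ∀ a ∈ C, ∀ a' ∈ C, (a ∩ a').Infinite → (a' \ a).Finite := by
    intro a ha a' ha' hinf
    obtain ⟨ζ, _, hζ, haζ⟩ := ha 0 hord_pos
    obtain ⟨ζ', hζζ', hζ', haζ'⟩ := ha' ζ hζ
    obtain ⟨c, hcζ, hsub⟩ := href ζ ζ' hζζ' hζ' a' haζ'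
    have hca : c = a := by
      by_contra hne
      have hfin : (a ∩ c).Finite := (hmad ζ hζ).2.1 haζ hcζ (fun h => hne h.symm)
      refine hinf ((hfin.union hsub).subset ?_)
      intro x hx
      by_cases hc : x ∈ c
      · exact Or.inl ⟨hx.1, hc⟩
      · exact Or.inr ⟨hx.2, hc⟩
    rw [← hca]
    exact hsub
  -- elements of `C` with infinite intersection are equal mod finite
  have hCeqv : ∀ a ∈ C, ∀ a' ∈ C, (a ∩ a').Infinite → eqvModFin a a' := by
    intro a ha a' ha' hinf
    exact ⟨hCkey a' ha' a ha (by rwa [Set.inter_comm]), hCkey a ha a' ha' hinf⟩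
  refine ⟨repModFin '' C, ⟨?_, ?_, ?_⟩, ?_⟩
  · -- elements of B are infinite
    rintro b ⟨a, haC, rfl⟩
    have h1 := (repModFin_eqv a).2
    exact infinite_of_subset_union (hCinf a haC) h1
      (by intro x hx; by_cases hr : x ∈ repModFin a
          · exact Or.inl hr
          · exact Or.inr ⟨hx, hr⟩)
  · -- pairwise almost disjoint
    rintro b ⟨a1, h1, rfl⟩ b' ⟨a2, h2, rfl⟩ hne
    have hneqv : ¬ eqvModFin a1 a2 := fun h => hne (repModFin_eq h)
    have hfin : (a1 ∩ a2).Finite := by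
      by_contra hinf
      exact hneqv (hCeqv a1 h1 a2 h2 hinf)
    have e1 := (repModFin_eqv a1).1
    have e2 := (repModFin_eqv a2).1
    refine ((hfin.union e1).union e2).subset ?_
    intro x hx
    by_cases ha1 : x ∈ a1
    · by_cases ha2 : x ∈ a2
      · exact Or.inl (Or.inl ⟨ha1, ha2⟩)
      · exact Or.inr ⟨hx.2, ha2⟩
    · exact Or.inl (Or.inr ⟨hx.1, ha1⟩)
  · -- maximality
    intro c hc
    have hch : ∀ ξ : Ordinal, ∃ a, ξ < lam.ord → a ∈ A ξ ∧ (c ∩ a).Infinite := by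
      intro ξ
      by_cases hξ : ξ < lam.ord
      · obtain ⟨a, ha, hca⟩ := (hmad ξ hξ).2.2 c hc
        exact ⟨a, fun _ => ⟨ha, hca⟩⟩
      · exact ⟨∅, fun h' => absurd h' hξ⟩
    choose f hf using hch
    obtain ⟨a, hacof⟩ := pigeon lam hreg hlt f
    have haC : a ∈ C := by
      intro β hβ
      obtain ⟨ξ, hβξ, hξ, hfξ⟩ := hacof β hβ
      exact ⟨ξ, hβξ, hξ, hfξ ▸ (hf ξ hξ).1⟩
    have hca : (c ∩ a).Infinite := by
      obtain ⟨ξ, _, hξ, hfξ⟩ := hacof 0 hord_pos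
      exact hfξ ▸ (hf ξ hξ).2
    refine ⟨repModFin a, ⟨a, haC, rfl⟩, ?_⟩
    have e := (repModFin_eqv a).2
    refine infinite_of_subset_union hca e ?_
    intro x hx
    by_cases hr : x ∈ repModFin a
    · exact Or.inl ⟨hx.1, hr⟩
    · exact Or.inr ⟨hx.2, hr⟩
  · -- B refines every level
    rintro ξ hξ b ⟨a, haC, rfl⟩
    obtain ⟨a', ha', hsub⟩ := hCrefine a haC ξ hξ
    refine ⟨a', ha', ?_⟩
    have e := (repModFin_eqv a).1
    refine (e.union hsub).subset ?_
    intro x hx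
    by_cases ha : x ∈ a
    · exact Or.inr ⟨ha, hx.2⟩
    · exact Or.inl ⟨hx.1, ha⟩
end

section
/- Let {A_ξ : ξ < λ} be a family of mad families on ℕ such that A_η refines A_ξ whenever ξ ≤ η < λ. Then there is no mad family B refining every A_ξ if and only if the set of infinite b ⊆ ℕ intersecting the family is not dense in ([ω]^ω, ⊆*), i.e., there exists an infinite ā ⊆ ℕ such that no infinite b ⊆* ā intersects the family. -/
/-- `b` intersects the family `{A ξ : ξ < lam}`: for each `ξ < lam` there is
`a ∈ A ξ` with `b ⊆* a`. -/
def Intersects (lam : Ordinal) (A : Ordinal → Set (Set ℕ)) (b : Set ℕ) : Prop :=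
  ∀ ξ < lam, ∃ a ∈ A ξ, AlmostSubset b a

/-!
If the sets intersecting the family are dense, a maximal almost disjoint family of such sets
(Zorn) is mad: an infinite `c` almost disjoint from all its members would almost contain an
intersecting set, which could be added to it. Conversely, a mad refinement `B` meets every
infinite `ā` in an infinite `b ∩ ā` with `b ∈ B`, and `b ∩ ā` intersects the family.
-/

lemma AlmostSubset.of_subset {b a : Set ℕ} (h : b ⊆ a) : AlmostSubset b a := by
  simp [AlmostSubset, Set.sdiff_eq_empty.2 h]

lemma AlmostSubset.mono_left {b' b a : Set ℕ} (h : b' ⊆ b) (hba : AlmostSubset b a) :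
    AlmostSubset b' a :=
  hba.subset (Set.sdiff_subset_sdiff_left h)

lemma AlmostSubset.inter_finite {b c a : Set ℕ} (hbc : AlmostSubset b c)
    (hca : (c ∩ a).Finite) : (b ∩ a).Finite :=
  (hbc.union hca).subset fun x ⟨hxb, hxa⟩ => by
    by_cases hxc : x ∈ c
    · exact Or.inr ⟨hxc, hxa⟩
    · exact Or.inl ⟨hxb, hxc⟩

lemma Intersects.mono {lam : Ordinal} {A : Ordinal → Set (Set ℕ)} {b' b : Set ℕ} (h : b' ⊆ b)
    (hb : Intersects lam A b) : Intersects lam A b' := fun ξ hξ =>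
  let ⟨a, ha, hba⟩ := hb ξ hξ
  ⟨a, ha, hba.mono_left h⟩

lemma exists_maximal_almostDisjoint_subset (D : Set (Set ℕ)) :
    ∃ B, Maximal (fun C => C ⊆ D ∧ C.Pairwise fun a a' => (a ∩ a').Finite) B := by
  apply zorn_subset
  intro c hcS hchain
  refine ⟨⋃₀ c, ⟨Set.sUnion_subset fun C hC => (hcS hC).1, ?_⟩,
    fun C hC => Set.subset_sUnion_of_mem hC⟩
  exact (Set.pairwise_sUnion hchain.directedOn).2 fun C hC => (hcS hC).2

lemma exists_isMadFamily_subset_of_dense {D : Set (Set ℕ)} (hD : ∀ d ∈ D, d.Infinite)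
    (hdense : ∀ c : Set ℕ, c.Infinite → ∃ b ∈ D, AlmostSubset b c) :
    ∃ B ⊆ D, IsMadFamily B := by
  obtain ⟨B, ⟨hBD, hBad⟩, hBmax⟩ := exists_maximal_almostDisjoint_subset D
  refine ⟨B, hBD, fun a ha => hD a (hBD ha), hBad, fun c hc => ?_⟩
  by_contra! hcB
  obtain ⟨b, hbD, hbc⟩ := hdense c hc
  have hbB : ∀ a ∈ B, (b ∩ a).Finite := fun a ha => hbc.inter_finite (hcB a ha)
  have hb_not_mem : b ∉ B := fun hb => hD b hbD (by simpa using hbB b hb)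
  have hinsert : (insert b B).Pairwise fun a a' => (a ∩ a').Finite :=
    hBad.insert fun a ha _ => ⟨hbB a ha, by simpa [Set.inter_comm] using hbB a ha⟩
  exact hb_not_mem (hBmax ⟨Set.insert_subset hbD hBD, hinsert⟩ (Set.subset_insert b B)
    (Set.mem_insert b B))

theorem no_refinement_iff_not_dense_general (lam : Ordinal) (A : Ordinal → Set (Set ℕ)) :
    (¬ ∃ B : Set (Set ℕ), IsMadFamily B ∧ ∀ ξ < lam, Refines B (A ξ)) ↔
      (∃ abar : Set ℕ, abar.Infinite ∧
        ∀ b : Set ℕ, b.Infinite → AlmostSubset b abar → ¬ Intersects lam A b) := by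
  constructor
  · intro hno
    by_contra! hdense
    obtain ⟨B, hBD, hBmad⟩ :=
      exists_isMadFamily_subset_of_dense (D := {b | b.Infinite ∧ Intersects lam A b})
        (fun _ hd => hd.1) fun c hc =>
          let ⟨b, hb, hbc, hbint⟩ := hdense c hc
          ⟨b, ⟨hb, hbint⟩, hbc⟩
    exact hno ⟨B, hBmad, fun ξ hξ b hb => (hBD hb).2 ξ hξ⟩
  · rintro ⟨abar, habar, hbad⟩ ⟨B, hBmad, hBref⟩
    obtain ⟨b, hbB, hb⟩ := hBmad.2.2 abar habar
    have hb_intersects : Intersects lam A b := fun ξ hξ => hBref ξ hξ b hbB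
    exact hbad (abar ∩ b) hb (.of_subset Set.inter_subset_left)
      (hb_intersects.mono Set.inter_subset_right)

/-- For a refining system of mad families, there is no common mad refinement iff
the set of infinite sets intersecting the family is not dense in `([ω]^ω, ⊆*)`,
i.e. there is an infinite `ā` such that no infinite `b ⊆* ā` intersects the family. -/
theorem no_refinement_iff_not_dense (lam : Ordinal) (A : Ordinal → Set (Set ℕ))
    (hmad : ∀ ξ < lam, IsMadFamily (A ξ))
    (href : ∀ ξ η : Ordinal, ξ ≤ η → η < lam → Refines (A η) (A ξ)) :
    (¬ ∃ B : Set (Set ℕ), IsMadFamily B ∧ ∀ ξ < lam, Refines B (A ξ)) ↔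
      (∃ abar : Set ℕ, abar.Infinite ∧
        ∀ b : Set ℕ, b.Infinite → AlmostSubset b abar → ¬ Intersects lam A b) :=
  no_refinement_iff_not_dense_general lam A
end

section
/- If there exists a distributivity matrix of height λ, then there exists a normal distributivity matrix of height λ, i.e., one which no infinite subset of ℕ intersects. -/
/-- Step 1: from a distributivity matrix we get an infinite set none of whose
infinite subsets intersects the matrix. -/
lemma exists_free_set (lam : Ordinal) (A : Ordinal → Set (Set ℕ))
    (hA : IsDistribMatrix lam A) :
    ∃ x : Set ℕ, x.Infinite ∧ ∀ y ⊆ x, y.Infinite → ¬ Intersects lam A y := by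
  obtain ⟨hmad, href, hnoref⟩ := hA
  by_contra hcon
  push_neg at hcon
  -- hcon : ∀ x, x.Infinite → ∃ y ⊆ x, y.Infinite ∧ Intersects lam A y
  set S : Set (Set (Set ℕ)) :=
    {F | (∀ y ∈ F, y.Infinite ∧ Intersects lam A y) ∧
      F.Pairwise fun a a' => (a ∩ a').Finite} with hS
  have hzorn : ∃ F, Maximal (· ∈ S) F := by
    apply zorn_subset
    intro c hcS hchain
    refine ⟨⋃₀ c, ⟨?_, ?_⟩, fun s hs => Set.subset_sUnion_of_mem hs⟩
    · rintro y ⟨t, htc, hyt⟩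
      exact (hcS htc).1 y hyt
    · rintro a ⟨t, htc, hat⟩ a' ⟨t', ht'c, ha't'⟩ hne
      rcases hchain.total htc ht'c with hsub | hsub
      · exact (hcS ht'c).2 (hsub hat) ha't' hne
      · exact (hcS htc).2 hat (hsub ha't') hne
  obtain ⟨F, hFS, hFmax⟩ := hzorn
  apply hnoref
  refine ⟨F, ⟨fun a ha => (hFS.1 a ha).1, hFS.2, ?_⟩, ?_⟩
  · intro b hb
    obtain ⟨y, hyb, hyinf, hyint⟩ := hcon b hb
    by_contra hfin
    push_neg at hfin
    have hfin' : ∀ a ∈ F, (b ∩ a).Finite := by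
      intro a ha
      by_contra hinf'
      exact hinf' (by
        exfalso
        exact absurd (hfin a ha) (by simpa using hinf'))
    -- show insert y F ∈ S and get contradiction with maximality
    have hymem : insert y F ∈ S := by
      constructor
      · rintro z (rfl | hz)
        · exact ⟨hyinf, hyint⟩
        · exact hFS.1 z hz
      · rw [Set.pairwise_insert]
        refine ⟨hFS.2, fun a ha hne => ?_⟩
        have h1 : (y ∩ a).Finite := ((hfin' a ha).subset (fun n hn => ⟨hyb hn.1, hn.2⟩))
        exact ⟨h1, by rwa [Set.inter_comm]⟩
    have := hFmax hymem (Set.subset_insert y F)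
    have hyF : y ∈ F := this (Set.mem_insert y F)
    have : (b ∩ y).Finite := hfin' y hyF
    have : (b ∩ y) = y := by
      ext n; exact ⟨fun hn => hn.2, fun hn => ⟨hyb hn, hn⟩⟩
    exact hyinf (by rw [← this]; exact hfin' y hyF)
  · intro ξ hξ b hb
    exact (hFS.1 b hb).2 ξ hξ

/-- If there is a distributivity matrix of height `lam`, then there is a normal
one of height `lam`, i.e. one which no infinite subset of ℕ intersects. -/
theorem exists_normal_distribMatrix (lam : Ordinal)
    (h : ∃ A : Ordinal → Set (Set ℕ), IsDistribMatrix lam A) :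
    ∃ A : Ordinal → Set (Set ℕ), IsDistribMatrix lam A ∧
      ∀ b : Set ℕ, b.Infinite → ¬ Intersects lam A b := by
  obtain ⟨A, hA⟩ := h
  obtain ⟨hmad, href, hnoref⟩ := hA
  obtain ⟨x₀, hx₀inf, hx₀⟩ := exists_free_set lam A ⟨hmad, href, hnoref⟩
  -- a bijection f : ℕ → x₀
  haveI : Infinite ↥x₀ := hx₀inf.to_subtype
  haveI : Countable ↥x₀ := (Set.to_countable x₀).to_subtype
  obtain ⟨d⟩ := nonempty_denumerable ↥x₀
  let e : ℕ ≃ ↥x₀ := (Denumerable.eqv ↥x₀).symm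
  let f : ℕ → ℕ := fun n => (e n : ℕ)
  have finj : Function.Injective f := fun n m hnm => e.injective (Subtype.ext hnm)
  have frange : Set.range f = x₀ := by
    ext x
    constructor
    · rintro ⟨n, rfl⟩; exact (e n).2
    · intro hx; exact ⟨e.symm ⟨x, hx⟩, by simp [f]⟩
  have hpre_fin : ∀ s : Set ℕ, s.Finite → (f ⁻¹' s).Finite := by
    intro s hs
    exact hs.preimage (Function.Injective.injOn finj)
  have hpre_inf : ∀ a : Set ℕ, (a ∩ x₀).Infinite → (f ⁻¹' a).Infinite := by
    intro a ha
    by_contra hfin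
    rw [Set.not_infinite] at hfin
    have : (f '' (f ⁻¹' a)).Finite := hfin.image f
    rw [Set.image_preimage_eq_inter_range, frange] at this
    exact ha this
  have himg_as : ∀ b a : Set ℕ, AlmostSubset b (f ⁻¹' a) → AlmostSubset (f '' b) a := by
    intro b a hab
    have hsub : (f '' b) \ a ⊆ f '' (b \ f ⁻¹' a) := by
      rintro y ⟨⟨x, hxb, rfl⟩, hya⟩
      exact ⟨x, ⟨hxb, hya⟩, rfl⟩
    exact (hab.image f).subset hsub
  -- the new matrix
  set A' : Ordinal → Set (Set ℕ) :=
    fun ξ => {s | ∃ a ∈ A ξ, (a ∩ x₀).Infinite ∧ s = f ⁻¹' a} with hA'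
  have hnormal : ∀ b : Set ℕ, b.Infinite → ¬ Intersects lam A' b := by
    intro b hb hint
    apply hx₀ (f '' b) (by rw [← frange]; exact Set.image_subset_range f b)
      (hb.image (Function.Injective.injOn finj))
    intro ξ hξ
    obtain ⟨s, hs, hbs⟩ := hint ξ hξ
    obtain ⟨a, haA, hainf, rfl⟩ := hs
    exact ⟨a, haA, himg_as b a hbs⟩
  refine ⟨A', ⟨?_, ?_, ?_⟩, hnormal⟩
  · -- madness
    intro ξ hξ
    obtain ⟨h1, h2, h3⟩ := hmad ξ hξ
    refine ⟨?_, ?_, ?_⟩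
    · rintro s ⟨a, haA, hainf, rfl⟩
      exact hpre_inf a hainf
    · rintro s ⟨a, haA, _, rfl⟩ t ⟨a', ha'A, _, rfl⟩ hst
      have hne : a ≠ a' := by rintro rfl; exact hst rfl
      have := h2 haA ha'A hne
      rw [← Set.preimage_inter]
      exact hpre_fin _ this
    · intro b hb
      have hfb : (f '' b).Infinite := hb.image (Function.Injective.injOn finj)
      obtain ⟨a, haA, hinf⟩ := h3 (f '' b) hfb
      have hbx : f '' b ⊆ x₀ := by rw [← frange]; exact Set.image_subset_range f b
      have hax : (a ∩ x₀).Infinite := by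
        apply hinf.mono
        rintro y ⟨hy1, hy2⟩
        exact ⟨hy2, hbx hy1⟩
      refine ⟨f ⁻¹' a, ⟨a, haA, hax, rfl⟩, ?_⟩
      by_contra hfin
      rw [Set.not_infinite] at hfin
      apply hinf
      have : f '' b ∩ a ⊆ f '' (b ∩ f ⁻¹' a) := by
        rintro y ⟨⟨x, hxb, rfl⟩, hya⟩
        exact ⟨x, ⟨hxb, hya⟩, rfl⟩
      exact (hfin.image f).subset this
  · -- refinement
    intro ξ η hle hη s hs
    obtain ⟨a, haA, hax, rfl⟩ := hs
    obtain ⟨a₂, ha₂A, hsub⟩ := href ξ η hle hη a haA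
    have hax₂ : (a₂ ∩ x₀).Infinite := by
      apply (hax.diff hsub).mono
      rintro x ⟨⟨hxa, hxx⟩, hnd⟩
      refine ⟨?_, hxx⟩
      by_contra hxa₂
      exact hnd ⟨hxa, hxa₂⟩
    refine ⟨f ⁻¹' a₂, ⟨a₂, ha₂A, hax₂, rfl⟩, ?_⟩
    show (f ⁻¹' a \ f ⁻¹' a₂).Finite
    rw [← Set.preimage_diff]
    exact hpre_fin _ hsub
  · -- no common refinement
    rintro ⟨B, ⟨hB1, hB2, hB3⟩, hBref⟩
    obtain ⟨b, hbB, -⟩ := hB3 Set.univ Set.infinite_univ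
    exact hnormal b (hB1 b hbB) (fun ξ hξ => hBref ξ hξ b hbB)
end

section
/- Every base matrix is normal: if {A_ξ : ξ < λ} is a distributivity matrix such that ⋃_{ξ<λ} A_ξ is dense in ([ω]^ω, ⊆*) (i.e., for every infinite b ⊆ ℕ there are ξ < λ and a ∈ A_ξ with a ⊆* b), then no infinite subset of ℕ intersects the matrix. -/
/-- Every base matrix is normal: if `{A ξ : ξ < lam}` is a distributivity matrix
whose union is dense in `([ω]^ω, ⊆*)`, then no infinite subset of ℕ intersects it. -/
theorem base_matrix_is_normal (lam : Ordinal) (A : Ordinal → Set (Set ℕ))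
    (hmat : IsDistribMatrix lam A)
    (hbase : ∀ b : Set ℕ, b.Infinite → ∃ ξ < lam, ∃ a ∈ A ξ, AlmostSubset a b) :
    ∀ b : Set ℕ, b.Infinite → ¬ Intersects lam A b := by
  intro b hb hI
  -- split b into two disjoint infinite subsets via an embedding ℕ ↪ b
  set g : ℕ → ℕ := fun n => (Set.Infinite.natEmbedding b hb n : ℕ) with hg
  have hginj : Function.Injective g := by
    intro m n h
    exact (Set.Infinite.natEmbedding b hb).injective (Subtype.ext h)
  have hgb : ∀ n, g n ∈ b := fun n => (Set.Infinite.natEmbedding b hb n).2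
  set y₁ : Set ℕ := g '' {n | Even n} with hy₁def
  set y₂ : Set ℕ := g '' {n | Odd n} with hy₂def
  have heveninf : {n : ℕ | Even n}.Infinite := by
    exact Set.infinite_of_injective_forall_mem (f := fun n : ℕ => 2 * n)
      (fun m n h => by dsimp at h; omega) (fun n => ⟨n, two_mul n⟩)
  have hoddinf : {n : ℕ | Odd n}.Infinite := by
    exact Set.infinite_of_injective_forall_mem (f := fun n : ℕ => 2 * n + 1)
      (fun m n h => by dsimp at h; omega) (fun n => ⟨n, rfl⟩)
  have hy₁inf : y₁.Infinite := heveninf.image hginj.injOn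
  have hy₂inf : y₂.Infinite := hoddinf.image hginj.injOn
  obtain ⟨ξ, hξ, a, ha, hay⟩ := hbase y₁ hy₁inf
  obtain ⟨c, hc, hbc⟩ := hI ξ hξ
  have hainf : a.Infinite := (hmat.1 ξ hξ).1 a ha
  have hsub : a \ c ⊆ (a \ y₁) ∪ (b \ c) := by
    intro n hn
    by_cases hny : n ∈ y₁
    · right
      obtain ⟨m, _, rfl⟩ := hny
      exact ⟨hgb m, hn.2⟩
    · left; exact ⟨hn.1, hny⟩
  have hfin : (a \ c).Finite := (hay.union hbc).subset hsub
  have hac : (a ∩ c).Infinite := by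
    have hsub2 : a ⊆ (a ∩ c) ∪ (a \ c) := by
      intro n hn
      by_cases h : n ∈ c
      · left; exact ⟨hn, h⟩
      · right; exact ⟨hn, h⟩
    intro hfin2
    exact hainf ((hfin2.union hfin).subset hsub2)
  have heq : a = c := by
    by_contra hne
    exact hac ((hmat.1 ξ hξ).2.1 ha hc hne)
  have hba : (b \ a).Finite := heq ▸ hbc
  have hsub3 : y₂ ⊆ (b \ a) ∪ (a \ y₁) := by
    rintro m ⟨n, hn, rfl⟩
    by_cases h : g n ∈ a
    · right
      refine ⟨h, ?_⟩
      rintro ⟨k, hk, hkeq⟩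
      have := hginj hkeq
      subst this
      exact (Nat.not_odd_iff_even.mpr hk) hn
    · left; exact ⟨hgb n, h⟩
  exact hy₂inf ((hba.union hay).subset hsub3)
end

section
/- Every maximal branch through a distributivity matrix which is not cofinal is a tower. -/
/-- A tower of length `δ`: a `⊆*`-decreasing sequence of infinite subsets of ℕ
indexed by the ordinals below `δ`, with no infinite pseudo-intersection. -/
def IsTower (δ : Ordinal) (a : Ordinal → Set ℕ) : Prop :=
  (∀ ξ < δ, (a ξ).Infinite) ∧
  (∀ ξ η : Ordinal, ξ ≤ η → η < δ → AlmostSubset (a η) (a ξ)) ∧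
  ¬ ∃ b : Set ℕ, b.Infinite ∧ ∀ ξ < δ, AlmostSubset b (a ξ)

/-- A branch of length `δ ≤ lam` through the matrix `{A ξ : ξ < lam}`:
a `⊆*`-decreasing sequence with `a ξ ∈ A ξ` for all `ξ < δ`. -/
def IsBranch (lam : Ordinal) (A : Ordinal → Set (Set ℕ))
    (δ : Ordinal) (a : Ordinal → Set ℕ) : Prop :=
  δ ≤ lam ∧ (∀ ξ < δ, a ξ ∈ A ξ) ∧
  ∀ ξ η : Ordinal, ξ ≤ η → η < δ → AlmostSubset (a η) (a ξ)

/-- A maximal branch: a branch which no strictly longer branch extends. -/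
def IsMaximalBranch (lam : Ordinal) (A : Ordinal → Set (Set ℕ))
    (δ : Ordinal) (a : Ordinal → Set ℕ) : Prop :=
  IsBranch lam A δ a ∧
  ¬ ∃ (δ' : Ordinal) (a' : Ordinal → Set ℕ), δ < δ' ∧ IsBranch lam A δ' a' ∧
    ∀ ξ < δ, a' ξ = a ξ

/-- Every maximal branch through a distributivity matrix which is not cofinal
is a tower. -/
theorem maximalBranch_not_cofinal_isTower (lam δ : Ordinal)
    (A : Ordinal → Set (Set ℕ)) (a : Ordinal → Set ℕ)
    (hmat : IsDistribMatrix lam A) (hmax : IsMaximalBranch lam A δ a)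
    (hnotcof : δ ≠ lam) :
    IsTower δ a := by
  obtain ⟨⟨hδlam, hmem, hdec⟩, hnotext⟩ := hmax
  have hδlt : δ < lam := lt_of_le_of_ne hδlam hnotcof
  obtain ⟨hmad, href, -⟩ := hmat
  refine ⟨?_, hdec, ?_⟩
  · intro ξ hξ
    exact (hmad ξ (hξ.trans hδlt)).1 _ (hmem ξ hξ)
  · rintro ⟨b, hb, hpseudo⟩
    obtain ⟨a', ha'A, ha'inf⟩ := (hmad δ hδlt).2.2 b hb
    have key : ∀ ξ < δ, AlmostSubset a' (a ξ) := by
      intro ξ hξ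
      obtain ⟨c, hcA, ha'c⟩ := href ξ δ hξ.le hδlt a' ha'A
      have hint : (a' ∩ a ξ).Infinite := by
        have h1 : ((b ∩ a') \ (b \ a ξ)).Infinite := ha'inf.diff (hpseudo ξ hξ)
        refine h1.mono ?_
        intro x hx
        exact ⟨hx.1.2, by_contra fun h => hx.2 ⟨hx.1.1, h⟩⟩
      have hceq : c = a ξ := by
        by_contra hne
        refine hint ?_
        have hfin : (c ∩ a ξ).Finite :=
          (hmad ξ (hξ.trans hδlt)).2.1 hcA (hmem ξ hξ) hne
        refine Set.Finite.subset (ha'c.union hfin) ?_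
        intro x hx
        by_cases hxc : x ∈ c
        · exact Or.inr ⟨hxc, hx.2⟩
        · exact Or.inl ⟨hx.1, hxc⟩
      exact hceq ▸ ha'c
    refine hnotext ⟨Order.succ δ, fun η => if η < δ then a η else a', Order.lt_succ δ,
      ⟨Order.succ_le_of_lt hδlt, ?_, ?_⟩, ?_⟩
    · intro ξ hξ
      rcases lt_or_eq_of_le (Order.lt_succ_iff.mp hξ) with h | h
      · simpa [h] using hmem ξ h
      · simp [h, lt_irrefl, ha'A]
    · intro ξ η hξη hη
      have hη' := Order.lt_succ_iff.mp hη
      by_cases hηδ : η < δ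
      · have hξδ : ξ < δ := lt_of_le_of_lt hξη hηδ
        simpa [hηδ, hξδ] using hdec ξ η hξη hηδ
      · by_cases hξδ : ξ < δ
        · simpa [hηδ, hξδ] using key ξ hξδ
        · simp only [hηδ, hξδ, if_neg]
          simp [AlmostSubset]
    · intro ξ hξ
      simp [hξ]
end

section
/- Let λ be a regular cardinal and suppose there is no tower of length δ for any ordinal δ < λ (equivalently, every ⊆*-decreasing sequence of infinite subsets of ℕ of length < λ has an infinite pseudo-intersection). Then every maximal branch through any distributivity matrix of height λ is cofinal. -/
/-
A branch `⟨a ξ : ξ < δ⟩` with `δ < λ` is a `⊆*`-decreasing sequence of infinite sets of length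
`δ`; as there are no towers that short, it has an infinite pseudo-intersection `b`. The mad family
`A δ` contains some `c` meeting `b` in an infinite set. For `ξ < δ`, `c` is almost contained in
some member of `A ξ`, which meets `a ξ ⊇* b` in an infinite set and hence, by almost
disjointness, is `a ξ` itself. So `c` continues the branch, contradicting maximality.
-/

theorem AlmostSubset.refl (a : Set ℕ) : AlmostSubset a a := by
  simp [AlmostSubset]

theorem eq_of_almostSubset_of_infinite_inter {A : Set (Set ℕ)}
    (hA : A.Pairwise fun a a' => (a ∩ a').Finite) {x y b c : Set ℕ} (hx : x ∈ A) (hy : y ∈ A)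
    (hcx : AlmostSubset c x) (hby : AlmostSubset b y) (hbc : (b ∩ c).Infinite) : x = y := by
  by_contra hne
  refine hbc (((hby.union hcx).union (hA hx hy hne)).subset fun n hn => ?_)
  simp only [Set.mem_union, Set.mem_sdiff, Set.mem_inter_iff] at hn ⊢
  tauto

section Branch

variable {lam δ : Ordinal} {A : Ordinal → Set (Set ℕ)} {a : Ordinal → Set ℕ}

theorem IsBranch.infinite (hmad : ∀ ξ < lam, IsMadFamily (A ξ)) (hbr : IsBranch lam A δ a)
    {ξ : Ordinal} (hξ : ξ < δ) : (a ξ).Infinite :=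
  (hmad ξ (hξ.trans_le hbr.1)).1 _ (hbr.2.1 ξ hξ)

theorem IsBranch.exists_pseudoIntersection (hmad : ∀ ξ < lam, IsMadFamily (A ξ))
    (hbr : IsBranch lam A δ a) (hnotower : ¬ ∃ a : Ordinal → Set ℕ, IsTower δ a) :
    ∃ b : Set ℕ, b.Infinite ∧ ∀ ξ < δ, AlmostSubset b (a ξ) := by
  by_contra hb
  exact hnotower ⟨a, fun _ hξ => hbr.infinite hmad hξ, hbr.2.2, hb⟩

theorem IsBranch.exists_mem_almostSubset (hmad : ∀ ξ < lam, IsMadFamily (A ξ))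
    (href : ∀ ξ η : Ordinal, ξ ≤ η → η < lam → Refines (A η) (A ξ))
    (hbr : IsBranch lam A δ a) (hδ : δ < lam) {b : Set ℕ} (hb : b.Infinite)
    (hba : ∀ ξ < δ, AlmostSubset b (a ξ)) :
    ∃ c ∈ A δ, ∀ ξ < δ, AlmostSubset c (a ξ) := by
  obtain ⟨c, hc, hbc⟩ := (hmad δ hδ).2.2 b hb
  refine ⟨c, hc, fun ξ hξ => ?_⟩
  obtain ⟨x, hx, hcx⟩ := href ξ δ hξ.le hδ c hc
  rwa [← eq_of_almostSubset_of_infinite_inter (hmad ξ (hξ.trans hδ)).2.1 hx (hbr.2.1 ξ hξ) hcx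
    (hba ξ hξ) hbc]

theorem IsBranch.update (hbr : IsBranch lam A δ a) (hδ : δ < lam) {c : Set ℕ} (hc : c ∈ A δ)
    (hca : ∀ ξ < δ, AlmostSubset c (a ξ)) :
    IsBranch lam A (δ + 1) (Function.update a δ c) := by
  have hlt : ∀ {ξ}, ξ < δ → Function.update a δ c ξ = a ξ := fun hξ =>
    Function.update_of_ne hξ.ne _ _
  refine ⟨Order.add_one_le_of_lt hδ, fun ξ hξ => ?_, fun ξ η hξη hη => ?_⟩
  · rcases (Order.lt_add_one_iff.1 hξ).lt_or_eq with hξ | rfl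
    · exact hlt hξ ▸ hbr.2.1 ξ hξ
    · simpa using hc
  · rcases (Order.lt_add_one_iff.1 hη).lt_or_eq with hη | rfl
    · rw [hlt hη, hlt (hξη.trans_lt hη)]
      exact hbr.2.2 ξ η hξη hη
    · rcases hξη.lt_or_eq with hξ | rfl
      · simpa [hlt hξ] using hca ξ hξ
      · exact AlmostSubset.refl _

end Branch

theorem maximalBranch_cofinal_of_no_short_towers_general (lam : Cardinal)
    (hnotower : ∀ δ < lam.ord, ¬ ∃ a : Ordinal → Set ℕ, IsTower δ a) :
    ∀ (A : Ordinal → Set (Set ℕ)) (δ : Ordinal) (a : Ordinal → Set ℕ),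
      IsDistribMatrix lam.ord A → IsMaximalBranch lam.ord A δ a → δ = lam.ord := by
  rintro A δ a ⟨hmad, href, -⟩ ⟨hbr, hmaximal⟩
  refine hbr.1.eq_of_not_lt fun hδ => hmaximal ?_
  obtain ⟨b, hb, hba⟩ := hbr.exists_pseudoIntersection hmad (hnotower δ hδ)
  obtain ⟨c, hc, hca⟩ := hbr.exists_mem_almostSubset hmad href hδ hb hba
  exact ⟨δ + 1, Function.update a δ c, Order.lt_add_one_iff.2 le_rfl, hbr.update hδ hc hca,
    fun ξ hξ => Function.update_of_ne hξ.ne _ _⟩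

/-- If `lam` is a regular cardinal and there is no tower of any length `< lam`,
then every maximal branch through any distributivity matrix of height `lam`
is cofinal. -/
theorem maximalBranch_cofinal_of_no_short_towers (lam : Cardinal)
    (hreg : lam.IsRegular)
    (hnotower : ∀ δ < lam.ord, ¬ ∃ a : Ordinal → Set ℕ, IsTower δ a) :
    ∀ (A : Ordinal → Set (Set ℕ)) (δ : Ordinal) (a : Ordinal → Set ℕ),
      IsDistribMatrix lam.ord A → IsMaximalBranch lam.ord A δ a → δ = lam.ord :=
  maximalBranch_cofinal_of_no_short_towers_general lam hnotower
end

section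
/- Let B ⊆ ℕ^ℕ be an unbounded family. Then the Fréchet (cofinite) filter F on ℕ is combinatorially B-Canjar: for every sequence X̄ = ⟨X_n : n ∈ ℕ⟩ of F-positive sets of finite subsets of ℕ there exists f ∈ B such that X̄_f is F-positive. -/
/-- `B ⊆ ℕ^ℕ` is an unbounded family: no single `g` eventually dominates all
members of `B`. -/
def UnboundedFam (B : Set (ℕ → ℕ)) : Prop :=
  ¬ ∃ g : ℕ → ℕ, ∀ f ∈ B, {n : ℕ | ¬ f n ≤ g n}.Finite

/-- `X` is `F`-positive: every set in the filter `F` contains a member of `X`. -/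
def FPositive (F : Filter ℕ) (X : Set (Finset ℕ)) : Prop :=
  ∀ A ∈ F, ∃ s ∈ X, (s : Set ℕ) ⊆ A

/-- `X̄_f := ⋃ₙ {s ∈ X̄(n) : s ⊆ {0, …, f(n) − 1}}`. -/
def cutBelow (Xbar : ℕ → Set (Finset ℕ)) (f : ℕ → ℕ) : Set (Finset ℕ) :=
  ⋃ n : ℕ, {s : Finset ℕ | s ∈ Xbar n ∧ ∀ m ∈ s, m < f n}

/-- `F` is combinatorially `B`-Canjar: for every sequence `X̄` of `F`-positive
sets of finite subsets of ℕ there is `f ∈ B` such that `X̄_f` is `F`-positive. -/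
def CombBCanjar (B : Set (ℕ → ℕ)) (F : Filter ℕ) : Prop :=
  ∀ Xbar : ℕ → Set (Finset ℕ), (∀ n, FPositive F (Xbar n)) →
    ∃ f ∈ B, FPositive F (cutBelow Xbar f)

/- Choose `s n ∈ X̄(n)` lying above `n` and let `g n` bound `s n`. Any `f ∈ B` with `g n < f n`
for infinitely many `n` keeps these `s n` in `X̄_f`, and sets lying above arbitrarily large `n`
are exactly what positivity for the cofinite filter asks for. -/

theorem fPositive_cofinite_iff {X : Set (Finset ℕ)} :
    FPositive Filter.cofinite X ↔ ∀ N, ∃ s ∈ X, ∀ m ∈ s, N ≤ m := by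
  simp only [FPositive, Nat.cofinite_eq_atTop, Filter.mem_atTop_sets]
  constructor
  · intro hX N
    obtain ⟨s, hsX, hs⟩ := hX (Set.Ici N) ⟨N, fun _ => id⟩
    exact ⟨s, hsX, fun m hm => hs hm⟩
  · rintro hX A ⟨N, hN⟩
    obtain ⟨s, hsX, hs⟩ := hX N
    exact ⟨s, hsX, fun m hm => hN m (hs m hm)⟩

theorem UnboundedFam.exists_infinite_lt {B : Set (ℕ → ℕ)} (hB : UnboundedFam B) (g : ℕ → ℕ) :
    ∃ f ∈ B, {n | g n < f n}.Infinite :=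
  (by simpa [UnboundedFam] using hB : ∀ g : ℕ → ℕ, ∃ f ∈ B, {n | g n < f n}.Infinite) g

theorem mem_cutBelow {Xbar : ℕ → Set (Finset ℕ)} {f : ℕ → ℕ} {s : Finset ℕ} {n : ℕ}
    (hs : s ∈ Xbar n) (hsf : ∀ m ∈ s, m < f n) : s ∈ cutBelow Xbar f :=
  Set.mem_iUnion.2 ⟨n, hs, hsf⟩

/-- For every unbounded family `B`, the Fréchet (cofinite) filter is
combinatorially `B`-Canjar. -/
theorem frechet_combBCanjar (B : Set (ℕ → ℕ)) (hB : UnboundedFam B) :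
    CombBCanjar B (Filter.cofinite : Filter ℕ) := by
  intro Xbar hX
  choose s hsX hs_ge using fun n => fPositive_cofinite_iff.1 (hX n) n
  obtain ⟨f, hfB, hf⟩ := hB.exists_infinite_lt fun n => (s n).sup id
  refine ⟨f, hfB, fPositive_cofinite_iff.2 fun N => ?_⟩
  obtain ⟨n, hn, hNn⟩ := hf.exists_gt N
  exact ⟨s n, mem_cutBelow (hsX n) fun m hm => (Finset.le_sup (f := id) hm).trans_lt hn,
    fun m hm => hNn.le.trans (hs_ge n m hm)⟩
end

section
/- Let B ⊆ ℕ^ℕ be an unbounded family. Then every countably generated filter on ℕ is combinatorially B-Canjar; that is, if F is the filter generated by the Fréchet filter together with countably many sets {a_n : n ∈ ℕ} forming a filter base (every finite intersection a_{n_0} ∩ … ∩ a_{n_{k−1}} is infinite), then F is combinatorially B-Canjar. -/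
/-- Every countably generated filter is combinatorially `B`-Canjar for any
unbounded family `B`: if `F` is generated by the Fréchet filter together with
countably many sets `{a n : n ∈ ℕ}` forming a filter base (all finite
intersections `a n₀ ∩ … ∩ a nₖ₋₁` are infinite), then `F` is combinatorially
`B`-Canjar. -/
theorem countably_generated_combBCanjar (B : Set (ℕ → ℕ)) (hB : UnboundedFam B)
    (a : ℕ → Set ℕ)
    (hbase : ∀ t : Finset ℕ, (⋂ n ∈ t, a n).Infinite) :
    CombBCanjar B (Filter.cofinite ⊓ ⨅ n : ℕ, Filter.principal (a n)) := by
  intro Xbar hpos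
  set F : Filter ℕ := Filter.cofinite ⊓ ⨅ n : ℕ, Filter.principal (a n) with hF
  -- the key basic sets belong to F
  have hmemF : ∀ n : ℕ, ((⋂ i ∈ Finset.range n, a i) \ Set.Iio n) ∈ F := by
    intro n
    rw [Set.diff_eq, Set.inter_comm]
    apply Filter.inter_mem
    · apply Filter.mem_inf_of_left
      rw [Filter.mem_cofinite, compl_compl]
      exact Set.finite_Iio n
    · apply Filter.mem_inf_of_right
      rw [Filter.biInter_finset_mem]
      intro i _
      exact Filter.mem_iInf_of_mem i (Filter.mem_principal_self _)
  -- choose witnesses s n ∈ Xbar n inside these basic sets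
  have hch : ∀ n : ℕ, ∃ s ∈ Xbar n,
      (s : Set ℕ) ⊆ (⋂ i ∈ Finset.range n, a i) \ Set.Iio n :=
    fun n => hpos n _ (hmemF n)
  choose s hsX hssub using hch
  set g : ℕ → ℕ := fun n => (s n).sup id + 1 with hg
  -- use unboundedness of B
  rw [UnboundedFam] at hB
  push_neg at hB
  obtain ⟨f, hfB, hfinf⟩ := hB g
  have hfinf' : {n : ℕ | g n < f n}.Infinite := hfinf
  refine ⟨f, hfB, ?_⟩
  intro A hA
  -- decompose A
  rw [hF, Filter.mem_inf_iff] at hA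
  obtain ⟨C, hC, D, hD, rfl⟩ := hA
  rw [Filter.mem_iInf] at hD
  obtain ⟨I, hIfin, V, hV, rfl⟩ := hD
  rw [Filter.mem_cofinite] at hC
  -- bounds
  obtain ⟨N₁, hN₁⟩ := hC.bddAbove
  obtain ⟨N₂, hN₂⟩ := hIfin.bddAbove
  obtain ⟨n, hnmem, hnlt⟩ := hfinf'.exists_gt (max N₁ N₂)
  have hgn : g n ≤ f n := le_of_lt hnmem
  refine ⟨s n, ?_, ?_⟩
  · exact Set.mem_iUnion.2 ⟨n, hsX n, fun m hm =>
      lt_of_le_of_lt (Finset.le_sup (f := id) hm) (lt_of_lt_of_le (Nat.lt_succ_self _) hgn)⟩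
  · intro x hx
    have hx' := hssub n hx
    obtain ⟨hx1, hx2⟩ := hx'
    have hxn : n ≤ x := not_lt.1 hx2
    constructor
    · -- x ∈ C
      by_contra hxC
      have := hN₁ hxC
      omega
    · -- x ∈ ⋂ i : I, V i
      refine Set.mem_iInter.2 fun i => ?_
      have hiV : a i.1 ⊆ V i := hV i
      apply hiV
      have hi : i.1 ∈ Finset.range n := by
        have := hN₂ i.2
        have : i.1 ≤ N₂ := this
        simp only [Finset.mem_range]
        omega
      exact Set.mem_iInter₂.1 hx1 i.1 hi
end

section
/- Let F₀ and F₁ be filters on ℕ containing the Fréchet filter. Let D_× be the set of pairs ((s₀,A₀),(s₁,A₁)) ∈ M_{F₀} × M_{F₁} with |s₀| = |s₁|, and let D_⊕ be the set of conditions (s,A) ∈ M_{F₀ ⊕ F₁} with |s| even. Then D_× is dense in M_{F₀} × M_{F₁}, D_⊕ is dense in M_{F₀ ⊕ F₁}, and the map ι : D_× → D_⊕ defined by ((s₀,A₀),(s₁,A₁)) ↦ (s₀ ⊕ s₁, A₀ ⊕ A₁) is an order isomorphism; consequently M_{F₀} × M_{F₁} and M_{F₀ ⊕ F₁} are forcing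 equivalent. -/
/-- A (set-theoretic) filter on ℕ containing the Fréchet filter: a collection
of subsets of ℕ closed under intersections and supersets, containing all
cofinite sets. -/
def IsFilterOnNat (F : Set (Set ℕ)) : Prop :=
  (∀ A ∈ F, ∀ B ∈ F, A ∩ B ∈ F) ∧
  (∀ A ∈ F, ∀ B : Set ℕ, A ⊆ B → B ∈ F) ∧
  (∀ A : Set ℕ, Aᶜ.Finite → A ∈ F)

/-- A condition of Mathias forcing `M_F`: a pair `(s, A)` with `s` a finite
binary sequence and `A ∈ F`. -/
structure MCond (F : Set (Set ℕ)) where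
  s : List Bool
  A : Set ℕ
  mem : A ∈ F

/-- The Mathias order: `(t, B) ≤ (s, A)` iff `t` end-extends `s`, `B ⊆ A`, and
every `n ≥ |s|` with `t(n) = 1` belongs to `A`. -/
instance MCond.instPreorder (F : Set (Set ℕ)) : Preorder (MCond F) where
  le q p := p.s <+: q.s ∧ q.A ⊆ p.A ∧
    ∀ n : ℕ, p.s.length ≤ n → q.s.getD n false = true → n ∈ p.A
  le_refl p := by
    refine ⟨List.prefix_rfl, subset_rfl, fun n hn ht => ?_⟩
    rw [List.getD_eq_default _ _ hn] at ht
    exact absurd ht (by simp)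
  le_trans a b c hab hbc := by
    obtain ⟨hab1, hab2, hab3⟩ := hab
    obtain ⟨hbc1, hbc2, hbc3⟩ := hbc
    refine ⟨hbc1.trans hab1, hab2.trans hbc2, fun n hn ht => ?_⟩
    by_cases hlen : n < b.s.length
    · apply hbc3 n hn
      rw [List.getD_eq_getElem _ _ hlen, hab1.getElem hlen]
      rw [List.getD_eq_getElem _ _ (lt_of_lt_of_le hlen hab1.length_le)] at ht
      exact ht
    · exact hbc2 (hab3 n (not_lt.mp hlen) ht)

/-- Interleaving of two finite binary sequences of equal length `L`:
the sequence `s₀ ⊕ s₁` of length `2L` with `(s₀ ⊕ s₁)(2n) = s₀(n)` and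
`(s₀ ⊕ s₁)(2n+1) = s₁(n)`. -/
def seqOplus (s₀ s₁ : List Bool) : List Bool :=
  List.ofFn fun i : Fin (s₀.length + s₁.length) =>
    if i.val % 2 = 0 then s₀.getD (i.val / 2) false else s₁.getD (i.val / 2) false

/-- `A ⊕ B := {2n : n ∈ A} ∪ {2m+1 : m ∈ B}`. -/
def setOplus (A B : Set ℕ) : Set ℕ :=
  {k : ℕ | ∃ n ∈ A, k = 2 * n} ∪ {k : ℕ | ∃ m ∈ B, k = 2 * m + 1}

/-- `F₀ ⊕ F₁ := {A ⊕ B : A ∈ F₀, B ∈ F₁}`. -/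
def filterOplus (F₀ F₁ : Set (Set ℕ)) : Set (Set ℕ) :=
  {C : Set ℕ | ∃ A ∈ F₀, ∃ B ∈ F₁, C = setOplus A B}

/-- `D_×`: the pairs of conditions with first coordinates of equal length. -/
def Dtimes (F₀ F₁ : Set (Set ℕ)) : Set (MCond F₀ × MCond F₁) :=
  {x | x.1.s.length = x.2.s.length}

/-- `D_⊕`: the conditions of `M_{F₀ ⊕ F₁}` whose finite part has even length. -/
def Doplus (F₀ F₁ : Set (Set ℕ)) : Set (MCond (filterOplus F₀ F₁)) :=
  {x | x.s.length % 2 = 0}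

/-! Interleaving identifies a pair of stems of equal length `L` with a stem of length `2L`, and a
pair of sets with a set, in such a way that each clause of the Mathias order on
`M_{F₀ ⊕ F₁}` splits into its even half and its odd half, which are the same clause in the two
coordinates. Density of `D_×` and `D_⊕` comes from padding stems with zeros: this puts no new
element into the generic real, so it extends any condition. -/

theorem Nat.forall_iff_forall_two_mul_and_two_mul_add_one {P : ℕ → Prop} :
    (∀ n, P n) ↔ (∀ n, P (2 * n)) ∧ ∀ n, P (2 * n + 1) := by
  refine ⟨fun h => ⟨fun n => h _, fun n => h _⟩, fun ⟨h₀, h₁⟩ n => ?_⟩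
  obtain ⟨k, rfl | rfl⟩ := Nat.even_or_odd' n
  exacts [h₀ k, h₁ k]

theorem List.prefix_iff_getD {α : Type*} {l₁ l₂ : List α} (d : α) :
    l₁ <+: l₂ ↔ l₁.length ≤ l₂.length ∧ ∀ i < l₁.length, l₁.getD i d = l₂.getD i d := by
  rw [List.prefix_iff_getElem]
  refine ⟨fun ⟨hl, h⟩ => ⟨hl, fun i hi => ?_⟩, fun ⟨hl, h⟩ => ⟨hl, fun i hi => ?_⟩⟩
  · rw [List.getD_eq_getElem _ _ hi, List.getD_eq_getElem _ _ (hi.trans_le hl), h i hi]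
  · have := h i hi
    rwa [List.getD_eq_getElem _ _ hi, List.getD_eq_getElem _ _ (hi.trans_le hl)] at this

theorem List.ext_getD {α : Type*} {l₁ l₂ : List α} (d : α) (hl : l₁.length = l₂.length)
    (h : ∀ i, l₁.getD i d = l₂.getD i d) : l₁ = l₂ :=
  ((List.prefix_iff_getD d).2 ⟨hl.le, fun i _ => h i⟩).eq_of_length hl

section seqOplus

variable {s₀ s₁ t₀ t₁ : List Bool}

theorem length_seqOplus (h : s₀.length = s₁.length) :
    (seqOplus s₀ s₁).length = 2 * s₀.length := by
  simp [seqOplus, h, two_mul]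

theorem getD_seqOplus (h : s₀.length = s₁.length) (k : ℕ) :
    (seqOplus s₀ s₁).getD k false =
      if k % 2 = 0 then s₀.getD (k / 2) false else s₁.getD (k / 2) false := by
  by_cases hk : k < 2 * s₀.length
  · rw [List.getD_eq_getElem _ _ (by rwa [length_seqOplus h])]
    simp [seqOplus]
  · rw [List.getD_eq_default _ _ (by rw [length_seqOplus h]; omega),
      List.getD_eq_default _ _ (by omega : s₀.length ≤ k / 2),
      List.getD_eq_default _ _ (by omega : s₁.length ≤ k / 2), ite_self]

theorem getD_seqOplus_two_mul (h : s₀.length = s₁.length) (n : ℕ) :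
    (seqOplus s₀ s₁).getD (2 * n) false = s₀.getD n false := by
  rw [getD_seqOplus h, if_pos (Nat.mul_mod_right 2 n), Nat.mul_div_cancel_left n two_pos]

theorem getD_seqOplus_two_mul_add_one (h : s₀.length = s₁.length) (n : ℕ) :
    (seqOplus s₀ s₁).getD (2 * n + 1) false = s₁.getD n false := by
  rw [getD_seqOplus h, if_neg (by omega), show (2 * n + 1) / 2 = n by omega]

theorem seqOplus_prefix_seqOplus_iff (hs : s₀.length = s₁.length) (ht : t₀.length = t₁.length) :
    seqOplus s₀ s₁ <+: seqOplus t₀ t₁ ↔ s₀ <+: t₀ ∧ s₁ <+: t₁ := by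
  have h_even : ∀ n L : ℕ, 2 * n < 2 * L ↔ n < L := by omega
  have h_odd : ∀ n L : ℕ, 2 * n + 1 < 2 * L ↔ n < L := by omega
  rw [List.prefix_iff_getD false, Nat.forall_iff_forall_two_mul_and_two_mul_add_one,
    List.prefix_iff_getD false (l₁ := s₀), List.prefix_iff_getD false (l₁ := s₁)]
  simp only [length_seqOplus hs, length_seqOplus ht, getD_seqOplus_two_mul hs,
    getD_seqOplus_two_mul ht, getD_seqOplus_two_mul_add_one hs, getD_seqOplus_two_mul_add_one ht,
    h_even, h_odd, Nat.mul_le_mul_left_iff two_pos, ← hs, ← ht]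
  tauto

/-- Of length `⌈|s| / 2⌉`, so that `getD_seqEvens` needs no parity hypothesis. -/
def seqEvens (s : List Bool) : List Bool :=
  List.ofFn fun i : Fin ((s.length + 1) / 2) => s.getD (2 * i) false

def seqOdds (s : List Bool) : List Bool :=
  List.ofFn fun i : Fin (s.length / 2) => s.getD (2 * i + 1) false

theorem length_seqEvens (s : List Bool) : (seqEvens s).length = (s.length + 1) / 2 :=
  List.length_ofFn

theorem length_seqOdds (s : List Bool) : (seqOdds s).length = s.length / 2 :=
  List.length_ofFn

theorem getD_seqEvens (s : List Bool) (i : ℕ) :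
    (seqEvens s).getD i false = s.getD (2 * i) false := by
  by_cases hi : i < (s.length + 1) / 2
  · rw [List.getD_eq_getElem _ _ (by rwa [length_seqEvens])]
    simp [seqEvens]
  · rw [List.getD_eq_default _ _ (by rw [length_seqEvens]; omega),
      List.getD_eq_default _ _ (by omega)]

theorem getD_seqOdds (s : List Bool) (i : ℕ) :
    (seqOdds s).getD i false = s.getD (2 * i + 1) false := by
  by_cases hi : i < s.length / 2
  · rw [List.getD_eq_getElem _ _ (by rwa [length_seqOdds])]
    simp [seqOdds]
  · rw [List.getD_eq_default _ _ (by rw [length_seqOdds]; omega),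
      List.getD_eq_default _ _ (by omega)]

theorem seqEvens_seqOplus (h : s₀.length = s₁.length) : seqEvens (seqOplus s₀ s₁) = s₀ :=
  List.ext_getD false (by rw [length_seqEvens, length_seqOplus h]; omega) fun i => by
    rw [getD_seqEvens, getD_seqOplus_two_mul h]

theorem seqOdds_seqOplus (h : s₀.length = s₁.length) : seqOdds (seqOplus s₀ s₁) = s₁ :=
  List.ext_getD false (by rw [length_seqOdds, length_seqOplus h]; omega) fun i => by
    rw [getD_seqOdds, getD_seqOplus_two_mul_add_one h]

theorem length_seqEvens_eq_length_seqOdds {s : List Bool} (h : s.length % 2 = 0) :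
    (seqEvens s).length = (seqOdds s).length := by
  rw [length_seqEvens, length_seqOdds]; omega

theorem seqOplus_seqEvens_seqOdds {s : List Bool} (h : s.length % 2 = 0) :
    seqOplus (seqEvens s) (seqOdds s) = s := by
  have hl := length_seqEvens_eq_length_seqOdds h
  refine List.ext_getD false (by rw [length_seqOplus hl, length_seqEvens]; omega) fun k => ?_
  obtain ⟨n, rfl | rfl⟩ := Nat.even_or_odd' k
  · rw [getD_seqOplus_two_mul hl, getD_seqEvens]
  · rw [getD_seqOplus_two_mul_add_one hl, getD_seqOdds]

end seqOplus

section setOplus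

variable {A B A' B' C : Set ℕ} {n : ℕ}

@[simp] theorem two_mul_mem_setOplus : 2 * n ∈ setOplus A B ↔ n ∈ A := by
  simp only [setOplus, Set.mem_union, Set.mem_ofPred_eq]
  constructor
  · rintro (⟨m, hm, he⟩ | ⟨m, -, he⟩)
    · rwa [show n = m by omega]
    · omega
  · exact fun h => Or.inl ⟨n, h, rfl⟩

@[simp] theorem two_mul_add_one_mem_setOplus : 2 * n + 1 ∈ setOplus A B ↔ n ∈ B := by
  simp only [setOplus, Set.mem_union, Set.mem_ofPred_eq]
  constructor
  · rintro (⟨m, -, he⟩ | ⟨m, hm, he⟩)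
    · omega
    · rwa [show n = m by omega]
  · exact fun h => Or.inr ⟨n, h, rfl⟩

theorem setOplus_subset_setOplus_iff : setOplus A B ⊆ setOplus A' B' ↔ A ⊆ A' ∧ B ⊆ B' := by
  rw [Set.subset_def, Nat.forall_iff_forall_two_mul_and_two_mul_add_one]
  simp only [two_mul_mem_setOplus, two_mul_add_one_mem_setOplus]
  rfl

theorem preimage_two_mul_setOplus : (2 * ·) ⁻¹' setOplus A B = A := by
  ext; simp

theorem preimage_two_mul_add_one_setOplus : (2 * · + 1) ⁻¹' setOplus A B = B := by
  ext; simp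

theorem setOplus_preimage_two_mul_preimage_two_mul_add_one :
    setOplus ((2 * ·) ⁻¹' C) ((2 * · + 1) ⁻¹' C) = C := by
  ext k
  obtain ⟨n, rfl | rfl⟩ := Nat.even_or_odd' k <;> simp

end setOplus

def NewBitsIn (s t : List Bool) (A : Set ℕ) : Prop :=
  ∀ n, s.length ≤ n → t.getD n false = true → n ∈ A

theorem newBitsIn_seqOplus_iff {s₀ s₁ t₀ t₁ : List Bool} {A₀ A₁ : Set ℕ}
    (hs : s₀.length = s₁.length) (ht : t₀.length = t₁.length) :
    NewBitsIn (seqOplus s₀ s₁) (seqOplus t₀ t₁) (setOplus A₀ A₁) ↔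
      NewBitsIn s₀ t₀ A₀ ∧ NewBitsIn s₁ t₁ A₁ := by
  have h_even : ∀ n L : ℕ, 2 * L ≤ 2 * n ↔ L ≤ n := by omega
  have h_odd : ∀ n L : ℕ, 2 * L ≤ 2 * n + 1 ↔ L ≤ n := by omega
  unfold NewBitsIn
  rw [Nat.forall_iff_forall_two_mul_and_two_mul_add_one]
  simp only [length_seqOplus hs, getD_seqOplus_two_mul ht, getD_seqOplus_two_mul_add_one ht,
    two_mul_mem_setOplus, two_mul_add_one_mem_setOplus, h_even, h_odd]
  rw [hs]

namespace MCond

variable {F F₀ F₁ : Set (Set ℕ)}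

attribute [ext] MCond

theorem le_iff {p q : MCond F} : q ≤ p ↔ p.s <+: q.s ∧ q.A ⊆ p.A ∧ NewBitsIn p.s q.s p.A :=
  Iff.rfl

def padRight (p : MCond F) (k : ℕ) : MCond F :=
  ⟨p.s ++ List.replicate k false, p.A, p.mem⟩

@[simp] theorem length_padRight (p : MCond F) (k : ℕ) :
    (p.padRight k).s.length = p.s.length + k := by
  simp [padRight]

theorem padRight_le (p : MCond F) (k : ℕ) : p.padRight k ≤ p := by
  refine le_iff.2 ⟨List.prefix_append _ _, subset_rfl, fun n hn ht => ?_⟩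
  dsimp only [padRight] at ht
  rw [List.getD_append_right _ _ _ _ hn, List.getD_eq_getElem?_getD,
    List.getElem?_getD_replicate_default_eq] at ht
  exact absurd ht Bool.false_ne_true

def oplus (p : MCond F₀) (q : MCond F₁) : MCond (filterOplus F₀ F₁) :=
  ⟨seqOplus p.s q.s, setOplus p.A q.A, _, p.mem, _, q.mem, rfl⟩

theorem oplus_le_oplus_iff {p p' : MCond F₀} {q q' : MCond F₁}
    (h : p.s.length = q.s.length) (h' : p'.s.length = q'.s.length) :
    p.oplus q ≤ p'.oplus q' ↔ p ≤ p' ∧ q ≤ q' := by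
  simp only [le_iff, oplus, seqOplus_prefix_seqOplus_iff h' h, setOplus_subset_setOplus_iff,
    newBitsIn_seqOplus_iff h' h]
  tauto

def evens (r : MCond (filterOplus F₀ F₁)) : MCond F₀ :=
  ⟨seqEvens r.s, (2 * ·) ⁻¹' r.A, by
    obtain ⟨A, hA, B, -, hr⟩ := r.mem
    rwa [hr, preimage_two_mul_setOplus]⟩

def odds (r : MCond (filterOplus F₀ F₁)) : MCond F₁ :=
  ⟨seqOdds r.s, (2 * · + 1) ⁻¹' r.A, by
    obtain ⟨A, -, B, hB, hr⟩ := r.mem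
    rwa [hr, preimage_two_mul_add_one_setOplus]⟩

theorem evens_oplus {p : MCond F₀} {q : MCond F₁} (h : p.s.length = q.s.length) :
    (p.oplus q).evens = p :=
  MCond.ext (seqEvens_seqOplus h) preimage_two_mul_setOplus

theorem odds_oplus {p : MCond F₀} {q : MCond F₁} (h : p.s.length = q.s.length) :
    (p.oplus q).odds = q :=
  MCond.ext (seqOdds_seqOplus h) preimage_two_mul_add_one_setOplus

theorem oplus_evens_odds {r : MCond (filterOplus F₀ F₁)} (h : r.s.length % 2 = 0) :
    r.evens.oplus r.odds = r :=
  MCond.ext (seqOplus_seqEvens_seqOdds h) setOplus_preimage_two_mul_preimage_two_mul_add_one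

end MCond

section Density

variable {F₀ F₁ : Set (Set ℕ)}

theorem exists_le_mem_Dtimes (p : MCond F₀ × MCond F₁) : ∃ q ≤ p, q ∈ Dtimes F₀ F₁ := by
  set L := max p.1.s.length p.2.s.length
  refine ⟨(p.1.padRight (L - p.1.s.length), p.2.padRight (L - p.2.s.length)),
    ⟨MCond.padRight_le _ _, MCond.padRight_le _ _⟩, ?_⟩
  simp only [Dtimes, Set.mem_ofPred_eq, MCond.length_padRight]
  omega

theorem exists_le_mem_Doplus (p : MCond (filterOplus F₀ F₁)) : ∃ q ≤ p, q ∈ Doplus F₀ F₁ :=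
  ⟨p.padRight (p.s.length % 2), MCond.padRight_le _ _, by
    simp only [Doplus, Set.mem_ofPred_eq, MCond.length_padRight]; omega⟩

end Density

def dtimesOrderIsoDoplus (F₀ F₁ : Set (Set ℕ)) : Dtimes F₀ F₁ ≃o Doplus F₀ F₁ where
  toFun x := ⟨x.1.1.oplus x.1.2, by
    simp [Doplus, MCond.oplus, length_seqOplus x.2]⟩
  invFun y := ⟨(y.1.evens, y.1.odds), length_seqEvens_eq_length_seqOdds y.2⟩
  left_inv x := Subtype.ext (Prod.ext (MCond.evens_oplus x.2) (MCond.odds_oplus x.2))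
  right_inv y := Subtype.ext (MCond.oplus_evens_odds y.2)
  map_rel_iff' {x y} := MCond.oplus_le_oplus_iff x.2 y.2

theorem mathias_product_oplus_equivalent_general (F₀ F₁ : Set (Set ℕ)) :
    (∀ p : MCond F₀ × MCond F₁, ∃ q ≤ p, q ∈ Dtimes F₀ F₁) ∧
    (∀ p : MCond (filterOplus F₀ F₁), ∃ q ≤ p, q ∈ Doplus F₀ F₁) ∧
    ∃ e : (Dtimes F₀ F₁) ≃o (Doplus F₀ F₁),
      ∀ x : Dtimes F₀ F₁,
        ((e x : MCond (filterOplus F₀ F₁)).s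
            = seqOplus (x : MCond F₀ × MCond F₁).1.s (x : MCond F₀ × MCond F₁).2.s) ∧
        ((e x : MCond (filterOplus F₀ F₁)).A
            = setOplus (x : MCond F₀ × MCond F₁).1.A (x : MCond F₀ × MCond F₁).2.A) :=
  ⟨exists_le_mem_Dtimes, exists_le_mem_Doplus, dtimesOrderIsoDoplus F₀ F₁, fun _ => ⟨rfl, rfl⟩⟩

/-- `D_×` is dense in `M_{F₀} × M_{F₁}`, `D_⊕` is dense in `M_{F₀ ⊕ F₁}`, and
the map `((s₀,A₀),(s₁,A₁)) ↦ (s₀ ⊕ s₁, A₀ ⊕ A₁)` is an order isomorphism from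
`D_×` onto `D_⊕`; consequently `M_{F₀} × M_{F₁}` and `M_{F₀ ⊕ F₁}` are forcing
equivalent. -/
theorem mathias_product_oplus_equivalent (F₀ F₁ : Set (Set ℕ))
    (h₀ : IsFilterOnNat F₀) (h₁ : IsFilterOnNat F₁) :
    (∀ p : MCond F₀ × MCond F₁, ∃ q ≤ p, q ∈ Dtimes F₀ F₁) ∧
    (∀ p : MCond (filterOplus F₀ F₁), ∃ q ≤ p, q ∈ Doplus F₀ F₁) ∧
    ∃ e : (Dtimes F₀ F₁) ≃o (Doplus F₀ F₁),
      ∀ x : Dtimes F₀ F₁,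
        ((e x : MCond (filterOplus F₀ F₁)).s
            = seqOplus (x : MCond F₀ × MCond F₁).1.s (x : MCond F₀ × MCond F₁).2.s) ∧
        ((e x : MCond (filterOplus F₀ F₁)).A
            = setOplus (x : MCond F₀ × MCond F₁).1.A (x : MCond F₀ × MCond F₁).2.A) :=
  mathias_product_oplus_equivalent_general F₀ F₁
end

section
/- The forcing Q₀ has precaliber ω₁: for every family {p_i : i < ω₁} of ω₁ many conditions in Q₀ there is an uncountable set X ⊆ ω₁ such that any finitely many conditions from {p_i : i ∈ X} have a common lower bound in Q₀. In particular, Q₀ has the countable chain condition. -/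
/-- A sequence of ordinals `< Λ` of length `< Λ` (normalized to be `0` beyond
its length). -/
structure SeqLT (Λ : Ordinal) where
  len : Ordinal
  val : Ordinal → Ordinal
  len_lt : len < Λ
  val_lt : ∀ ξ < len, val ξ < Λ
  val_zero : ∀ ξ, len ≤ ξ → val ξ = 0

/-- `τ ⊴ σ`: `σ` extends `τ`. -/
def SeqExt {Λ : Ordinal} (τ σ : SeqLT Λ) : Prop :=
  τ.len ≤ σ.len ∧ ∀ ξ < τ.len, σ.val ξ = τ.val ξ

/-- `τ ⊲ σ`: `σ` properly extends `τ`. -/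
def SeqSExt {Λ : Ordinal} (τ σ : SeqLT Λ) : Prop :=
  SeqExt τ σ ∧ τ ≠ σ

/-- `σ` has successor length. -/
def IsSuccSeq {Λ : Ordinal} (σ : SeqLT Λ) : Prop :=
  ∃ β : Ordinal, σ.len = β + 1

/-- `τ` lies in the same block as `σ` and strictly to its left: `σ = ρ⌢α`,
`τ = ρ⌢β` with `β < α`. -/
def BlockLeft {Λ : Ordinal} (τ σ : SeqLT Λ) : Prop :=
  ∃ δ : Ordinal, σ.len = δ + 1 ∧ τ.len = δ + 1 ∧
    (∀ ξ < δ, τ.val ξ = σ.val ξ) ∧ τ.val δ < σ.val δ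

/-- A condition of the forcing `Q₀`: a finite partial function `p` on the set
of sequences of successor length, where `p(σ) = (s_σ, f_σ, h_σ)` consists of a
finite binary sequence `s_σ`, a finite partial function `f_σ` (promises along
the branch) and a finite partial function `h_σ` (promises within the block),
subject to the coherence conditions of Definition 3.2 of the paper.
The partial functions `f σ` and `h σ` are represented as `Option ℕ`-valued
functions; their values are only relevant for `σ ∈ dom`. -/
structure QCond (Λ : Ordinal) where
  dom : Set (SeqLT Λ)
  dom_finite : dom.Finite
  dom_succ : ∀ σ ∈ dom, IsSuccSeq σ
  s : SeqLT Λ → List Bool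
  f : SeqLT Λ → SeqLT Λ → Option ℕ
  h : SeqLT Λ → SeqLT Λ → Option ℕ
  s_mono : ∀ σ ∈ dom, ∀ τ ∈ dom, SeqSExt τ σ → (s σ).length ≤ (s τ).length
  f_dom : ∀ σ ∈ dom, ∀ τ : SeqLT Λ, (f σ τ).isSome → τ ∈ dom ∧ SeqSExt τ σ
  f_coh : ∀ σ ∈ dom, ∀ (τ : SeqLT Λ) (k : ℕ), f σ τ = some k →
    ∀ n : ℕ, k ≤ n → n < (s τ).length → n < (s σ).length →
      (s τ).getD n false = false → (s σ).getD n false = false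
  h_dom : ∀ σ ∈ dom, ∀ τ : SeqLT Λ, (h σ τ).isSome → τ ∈ dom ∧ BlockLeft τ σ
  h_coh : ∀ σ ∈ dom, ∀ (τ : SeqLT Λ) (k : ℕ), h σ τ = some k →
    ∀ n : ℕ, k ≤ n → n < (s τ).length → n < (s σ).length →
      (s τ).getD n false = false ∨ (s σ).getD n false = false

/-- The order on `Q₀`: `q ≤ p` iff `dom p ⊆ dom q` and, for `σ ∈ dom p`,
`s^p_σ` is an initial segment of `s^q_σ`, and the promises of `q` extend
(and strengthen) those of `p`. -/
def QLE {Λ : Ordinal} (q p : QCond Λ) : Prop :=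
  p.dom ⊆ q.dom ∧ ∀ σ ∈ p.dom,
    (p.s σ <+: q.s σ) ∧
    (∀ (τ : SeqLT Λ) (k : ℕ), p.f σ τ = some k → ∃ k' ≤ k, q.f σ τ = some k') ∧
    (∀ (τ : SeqLT Λ) (k : ℕ), p.h σ τ = some k → ∃ k' ≤ k, q.h σ τ = some k')

/-- Compatibility in `Q₀`: a common lower bound exists. -/
def QCompat {Λ : Ordinal} (p q : QCond Λ) : Prop :=
  ∃ r : QCond Λ, QLE r p ∧ QLE r q
/-!
Δ-system argument. Among uncountably many conditions, the Δ-system lemma yields uncountably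
many whose domains pairwise meet in one finite root `R`; as the data of a condition on `R`
range over a countable set, uncountably many of them also carry the same data on `R`. Such
conditions are amalgamated by taking the union of their domains and padding every binary
sequence with zeros to one common length: a zero never breaks a promise `s_τ(n) = 0 → s_σ(n) = 0`
or `s_τ(n) = 0 ∨ s_σ(n) = 0`, and equal lengths make requirement (ii) trivial.
-/

open Set

section DeltaSystem

variable {ι α : Type*}

theorem exists_not_countable_fiber {C : Type*} [Countable C] {S : Set ι} (hS : ¬ S.Countable)
    (φ : ι → C) : ∃ c, ¬ {i ∈ S | φ i = c}.Countable := by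
  by_contra! h
  refine hS ((countable_iUnion h).mono fun i hi => ?_)
  exact mem_iUnion.2 ⟨φ i, hi, rfl⟩

/-- A maximal pairwise disjoint subfamily cannot be countable: the members of `S` meeting one
of its countably many finite sets are countably many, so some other member could be added. -/
theorem exists_not_countable_pairwiseDisjoint {S : Set ι} (hS : ¬ S.Countable)
    (D : ι → Finset α) (hD : ∀ a, {i ∈ S | a ∈ D i}.Countable) :
    ∃ X ⊆ S, ¬ X.Countable ∧ X.PairwiseDisjoint D := by
  obtain ⟨X, ⟨hXS, hXD⟩, hmax⟩ :=
    zorn_subset {X | X ⊆ S ∧ X.PairwiseDisjoint D} fun c hc hchain => by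
      exact ⟨⋃₀ c, ⟨sUnion_subset fun X hX => (hc hX).1,
        (pairwise_sUnion hchain.directedOn).2 fun X hX => (hc hX).2⟩,
        fun _ => subset_sUnion_of_mem⟩
  refine ⟨X, hXS, fun hX => ?_, hXD⟩
  have hbad : (X ∪ ⋃ i ∈ X, ⋃ a ∈ (D i : Set α), {j ∈ S | a ∈ D j}).Countable :=
    hX.union (hX.biUnion fun i _ => (D i).countable_toSet.biUnion fun a _ => hD a)
  obtain ⟨j, hjS, hj⟩ := not_subset.1 fun h => hS (hbad.mono h)
  have hdisj : ∀ i ∈ X, j ≠ i → Disjoint (D j) (D i) := fun i hi _ =>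
    Finset.disjoint_left.2 fun a haj hai =>
      hj (Or.inr (mem_biUnion hi (mem_biUnion (Finset.mem_coe.2 hai) ⟨hjS, haj⟩)))
  exact hj (Or.inl (hmax ⟨insert_subset hjS hXS, hXD.insert hdisj⟩ (subset_insert j X)
    (mem_insert j X)))

variable [DecidableEq α]

theorem exists_not_countable_deltaSystem_of_card_le (n : ℕ) (D : ι → Finset α) {S : Set ι}
    (hS : ¬ S.Countable) (hcard : ∀ i ∈ S, (D i).card ≤ n) :
    ∃ X ⊆ S, ¬ X.Countable ∧ ∃ R, ∀ i ∈ X, ∀ j ∈ X, i ≠ j → D i ∩ D j = R := by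
  induction n generalizing D S with
  | zero =>
    refine ⟨S, subset_rfl, hS, ∅, fun i hi j _ _ => ?_⟩
    simp [Finset.card_eq_zero.1 (Nat.le_zero.1 (hcard i hi))]
  | succ n ih =>
    by_cases hfreq : ∃ a, ¬ {i ∈ S | a ∈ D i}.Countable
    · obtain ⟨a, ha⟩ := hfreq
      obtain ⟨X, hXS, hX, R, hR⟩ := ih (fun i => (D i).erase a) ha fun i hi => by
        have := hcard i hi.1
        rw [Finset.card_erase_of_mem hi.2]
        omega
      refine ⟨X, fun i hi => (hXS hi).1, hX, insert a R, fun i hi j hj hij => ?_⟩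
      rw [← hR i hi j hj hij, Finset.erase_inter, Finset.inter_erase, Finset.erase_idem,
        Finset.insert_erase (Finset.mem_inter.2 ⟨(hXS hi).2, (hXS hj).2⟩)]
    · push Not at hfreq
      obtain ⟨X, hXS, hX, hdisj⟩ := exists_not_countable_pairwiseDisjoint hS D hfreq
      exact ⟨X, hXS, hX, ∅, fun i hi j hj hij =>
        Finset.disjoint_iff_inter_eq_empty.1 (hdisj hi hj hij)⟩

theorem exists_not_countable_deltaSystem (D : ι → Finset α) {S : Set ι} (hS : ¬ S.Countable) :
    ∃ X ⊆ S, ¬ X.Countable ∧ ∃ R, ∀ i ∈ X, ∀ j ∈ X, i ≠ j → D i ∩ D j = R := by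
  obtain ⟨n, hn⟩ := exists_not_countable_fiber hS fun i => (D i).card
  obtain ⟨X, hXS, hX, hR⟩ := exists_not_countable_deltaSystem_of_card_le n D hn fun i hi => hi.2.le
  exact ⟨X, hXS.trans (sep_subset _ _), hX, hR⟩

end DeltaSystem

theorem not_countable_Iio_aleph_one_ord : ¬ (Iio (Cardinal.aleph 1).ord).Countable := by
  rw [← Cardinal.le_aleph0_iff_set_countable]
  simp

theorem List.getD_rightpad {α : Type*} (l : List α) (n k : ℕ) (d : α) :
    (l.rightpad n d).getD k d = l.getD k d := by
  by_cases hk : k < l.length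
  · rw [List.rightpad, List.getD_append _ _ _ _ hk]
  · rw [List.rightpad, List.getD_append_right _ _ _ _ (not_lt.1 hk),
      List.getD_eq_default _ _ (not_lt.1 hk), List.getD_eq_getElem?_getD, List.getElem?_replicate]
    split <;> rfl

section PickSome

variable {β γ : Type*}

open Classical in
noncomputable def pickSome (P : Set β) (g : β → Option γ) : Option γ :=
  if h : ∃ p ∈ P, (g p).isSome then g h.choose else none

theorem pickSome_eq_some {P : Set β} {g : β → Option γ}
    (hg : ∀ p ∈ P, ∀ q ∈ P, ∀ a b, g p = some a → g q = some b → a = b)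
    {p : β} (hp : p ∈ P) {a : γ} (ha : g p = some a) : pickSome P g = some a := by
  have h : ∃ p ∈ P, (g p).isSome := ⟨p, hp, by simp [ha]⟩
  obtain ⟨hq, hsome⟩ := h.choose_spec
  obtain ⟨b, hb⟩ := Option.isSome_iff_exists.1 hsome
  rw [pickSome, dif_pos h, hb, hg _ hq _ hp _ _ hb ha]

theorem exists_of_pickSome_eq_some {P : Set β} {g : β → Option γ} {a : γ}
    (h : pickSome P g = some a) : ∃ p ∈ P, g p = some a := by
  unfold pickSome at h
  split_ifs at h with hex
  exact ⟨_, hex.choose_spec.1, h⟩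

end PickSome

namespace QCond

variable {Λ : Ordinal}

def Agree (p q : QCond Λ) : Prop :=
  ∀ σ ∈ p.dom, σ ∈ q.dom → p.s σ = q.s σ ∧
    ∀ τ ∈ p.dom, τ ∈ q.dom → p.f σ τ = q.f σ τ ∧ p.h σ τ = q.h σ τ

theorem agree_refl (p : QCond Λ) : p.Agree p :=
  fun _ _ _ => ⟨rfl, fun _ _ _ => ⟨rfl, rfl⟩⟩

theorem Agree.eq_of_f_eq_some {p q : QCond Λ} (hpq : p.Agree q) {σ τ : SeqLT Λ}
    (hσp : σ ∈ p.dom) (hσq : σ ∈ q.dom) {k l : ℕ} (hk : p.f σ τ = some k)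
    (hl : q.f σ τ = some l) : k = l := by
  have hτp := (p.f_dom σ hσp τ (by simp [hk])).1
  have hτq := (q.f_dom σ hσq τ (by simp [hl])).1
  rw [((hpq σ hσp hσq).2 τ hτp hτq).1, hl] at hk
  exact (Option.some_injective _ hk).symm

theorem Agree.eq_of_h_eq_some {p q : QCond Λ} (hpq : p.Agree q) {σ τ : SeqLT Λ}
    (hσp : σ ∈ p.dom) (hσq : σ ∈ q.dom) {k l : ℕ} (hk : p.h σ τ = some k)
    (hl : q.h σ τ = some l) : k = l := by
  have hτp := (p.h_dom σ hσp τ (by simp [hk])).1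
  have hτq := (q.h_dom σ hσq τ (by simp [hl])).1
  rw [((hpq σ hσp hσq).2 τ hτp hτq).2, hl] at hk
  exact (Option.some_injective _ hk).symm

section Amalgam

variable (P : Finset (QCond Λ))

noncomputable def lengthBound : ℕ :=
  P.sup fun p => p.dom_finite.toFinset.sup fun σ => (p.s σ).length

variable {P}

theorem length_s_le_lengthBound {p : QCond Λ} (hp : p ∈ P) {σ : SeqLT Λ} (hσ : σ ∈ p.dom) :
    (p.s σ).length ≤ lengthBound P :=
  (Finset.le_sup (f := fun σ => (p.s σ).length) (p.dom_finite.mem_toFinset.2 hσ)).trans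
    (Finset.le_sup (f := fun p : QCond Λ => p.dom_finite.toFinset.sup fun σ => (p.s σ).length) hp)

variable (P)

open Classical in
noncomputable def amalgamS (σ : SeqLT Λ) : List Bool :=
  ((pickSome ↑P fun p : QCond Λ => if σ ∈ p.dom then some (p.s σ) else none).getD []).rightpad
    (lengthBound P) false

open Classical in
noncomputable def amalgamPromise (e : QCond Λ → SeqLT Λ → SeqLT Λ → Option ℕ)
    (σ τ : SeqLT Λ) : Option ℕ :=
  pickSome ↑P fun p : QCond Λ => if σ ∈ p.dom then e p σ τ else none

variable {P}

theorem amalgamPromise_eq_some {e : QCond Λ → SeqLT Λ → SeqLT Λ → Option ℕ}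
    (he : ∀ p ∈ P, ∀ q ∈ P, ∀ σ ∈ p.dom, σ ∈ q.dom → ∀ τ (k l : ℕ),
      e p σ τ = some k → e q σ τ = some l → k = l)
    {p : QCond Λ} (hp : p ∈ P) {σ τ : SeqLT Λ} (hσ : σ ∈ p.dom) {k : ℕ}
    (hk : e p σ τ = some k) : amalgamPromise P e σ τ = some k := by
  refine pickSome_eq_some (fun q hq r hr a b hqa hrb => ?_) hp (by rw [if_pos hσ, hk])
  split_ifs at hqa hrb with hσq hσr
  exact he q hq r hr σ hσq hσr τ a b hqa hrb

theorem exists_of_amalgamPromise_eq_some {e : QCond Λ → SeqLT Λ → SeqLT Λ → Option ℕ}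
    {σ τ : SeqLT Λ} {k : ℕ} (h : amalgamPromise P e σ τ = some k) :
    ∃ p ∈ P, σ ∈ p.dom ∧ e p σ τ = some k := by
  obtain ⟨p, hp, hpk⟩ := exists_of_pickSome_eq_some h
  split_ifs at hpk with hσ
  exact ⟨p, hp, hσ, hpk⟩

variable (hP : ∀ p ∈ P, ∀ q ∈ P, p.Agree q)
include hP

theorem amalgamS_eq {p : QCond Λ} (hp : p ∈ P) {σ : SeqLT Λ} (hσ : σ ∈ p.dom) :
    amalgamS P σ = (p.s σ).rightpad (lengthBound P) false := by
  rw [amalgamS, pickSome_eq_some (a := p.s σ) ?_ hp (if_pos hσ), Option.getD_some]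
  intro q hq r hr a b hqa hrb
  split_ifs at hqa hrb with hσq hσr
  exact (Option.some_injective _ hqa).symm.trans
    (((hP q hq r hr σ hσq hσr).1).trans (Option.some_injective _ hrb))

theorem length_amalgamS {p : QCond Λ} (hp : p ∈ P) {σ : SeqLT Λ} (hσ : σ ∈ p.dom) :
    (amalgamS P σ).length = lengthBound P := by
  rw [amalgamS_eq hP hp hσ, List.length_rightpad, max_eq_left (length_s_le_lengthBound hp hσ)]

theorem getD_amalgamS {p : QCond Λ} (hp : p ∈ P) {σ : SeqLT Λ} (hσ : σ ∈ p.dom) (n : ℕ) :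
    (amalgamS P σ).getD n false = (p.s σ).getD n false := by
  rw [amalgamS_eq hP hp hσ, List.getD_rightpad]

variable (P) in
noncomputable def amalgam : QCond Λ where
  dom := ⋃ p ∈ P, p.dom
  dom_finite := P.finite_toSet.biUnion fun p _ => p.dom_finite
  dom_succ σ hσ := by
    obtain ⟨p, hp, hσp⟩ := mem_iUnion₂.1 hσ
    exact p.dom_succ σ hσp
  s := amalgamS P
  f := amalgamPromise P QCond.f
  h := amalgamPromise P QCond.h
  s_mono σ hσ τ hτ _ := by
    obtain ⟨p, hp, hσp⟩ := mem_iUnion₂.1 hσ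
    obtain ⟨q, hq, hτq⟩ := mem_iUnion₂.1 hτ
    rw [length_amalgamS hP hp hσp, length_amalgamS hP hq hτq]
  f_dom σ _ τ hsome := by
    obtain ⟨k, hk⟩ := Option.isSome_iff_exists.1 hsome
    obtain ⟨p, hp, hσp, hpk⟩ := exists_of_amalgamPromise_eq_some hk
    obtain ⟨hτp, hτσ⟩ := p.f_dom σ hσp τ (by simp [hpk])
    exact ⟨mem_biUnion hp hτp, hτσ⟩
  f_coh σ _ τ k hk n hkn _ _ hτ0 := by
    obtain ⟨p, hp, hσp, hpk⟩ := exists_of_amalgamPromise_eq_some hk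
    obtain ⟨hτp, hτσ⟩ := p.f_dom σ hσp τ (by simp [hpk])
    rw [getD_amalgamS hP hp hσp]
    rw [getD_amalgamS hP hp hτp] at hτ0
    by_cases hn : n < (p.s σ).length
    · exact p.f_coh σ hσp τ k hpk n hkn (hn.trans_le (p.s_mono σ hσp τ hτp hτσ)) hn hτ0
    · exact List.getD_eq_default _ _ (not_lt.1 hn)
  h_dom σ _ τ hsome := by
    obtain ⟨k, hk⟩ := Option.isSome_iff_exists.1 hsome
    obtain ⟨p, hp, hσp, hpk⟩ := exists_of_amalgamPromise_eq_some hk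
    obtain ⟨hτp, hτσ⟩ := p.h_dom σ hσp τ (by simp [hpk])
    exact ⟨mem_biUnion hp hτp, hτσ⟩
  h_coh σ _ τ k hk n hkn _ _ := by
    obtain ⟨p, hp, hσp, hpk⟩ := exists_of_amalgamPromise_eq_some hk
    have hτp := (p.h_dom σ hσp τ (by simp [hpk])).1
    rw [getD_amalgamS hP hp hσp, getD_amalgamS hP hp hτp]
    by_cases hnτ : n < (p.s τ).length
    · by_cases hnσ : n < (p.s σ).length
      · exact p.h_coh σ hσp τ k hpk n hkn hnτ hnσ
      · exact Or.inr (List.getD_eq_default _ _ (not_lt.1 hnσ))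
    · exact Or.inl (List.getD_eq_default _ _ (not_lt.1 hnτ))

theorem amalgam_le {p : QCond Λ} (hp : p ∈ P) : QLE (amalgam P hP) p := by
  refine ⟨subset_biUnion_of_mem (u := fun q : QCond Λ => q.dom) hp, fun σ hσ => ⟨?_, ?_, ?_⟩⟩
  · show p.s σ <+: amalgamS P σ
    rw [amalgamS_eq hP hp hσ]
    exact List.prefix_append _ _
  · exact fun τ k hk => ⟨k, le_rfl, amalgamPromise_eq_some (e := QCond.f)
      (fun q hq r hr σ hσq hσr _ _ _ => (hP q hq r hr).eq_of_f_eq_some hσq hσr) hp hσ hk⟩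
  · exact fun τ k hk => ⟨k, le_rfl, amalgamPromise_eq_some (e := QCond.h)
      (fun q hq r hr σ hσq hσr _ _ _ => (hP q hq r hr).eq_of_h_eq_some hσq hσr) hp hσ hk⟩

end Amalgam

def restrict (p : QCond Λ) (R : Finset (SeqLT Λ)) :
    (R → List Bool) × (R → R → Option ℕ × Option ℕ) :=
  (fun σ => p.s σ, fun σ τ => (p.f σ τ, p.h σ τ))

theorem agree_of_restrict_eq {p q : QCond Λ} {R : Finset (SeqLT Λ)} (hR : p.dom ∩ q.dom ⊆ R)
    (h : p.restrict R = q.restrict R) : p.Agree q := by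
  intro σ hσp hσq
  have hσ : σ ∈ R := hR ⟨hσp, hσq⟩
  refine ⟨congrFun (congrArg Prod.fst h) ⟨σ, hσ⟩, fun τ hτp hτq => ?_⟩
  have hτ : τ ∈ R := hR ⟨hτp, hτq⟩
  exact Prod.ext_iff.1 (congrFun (congrFun (congrArg Prod.snd h) ⟨σ, hσ⟩) ⟨τ, hτ⟩)

theorem exists_not_countable_centered {ι : Type*} (p : ι → QCond Λ) {S : Set ι}
    (hS : ¬ S.Countable) :
    ∃ X ⊆ S, ¬ X.Countable ∧ ∀ t : Finset ι, ↑t ⊆ X → ∃ q : QCond Λ, ∀ i ∈ t, QLE q (p i) := by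
  classical
  obtain ⟨Y, hYS, hY, R, hR⟩ :=
    exists_not_countable_deltaSystem (fun i => (p i).dom_finite.toFinset) hS
  obtain ⟨c, hc⟩ := exists_not_countable_fiber hY fun i => (p i).restrict R
  refine ⟨_, (sep_subset _ _).trans hYS, hc, fun t ht => ?_⟩
  have hagree : ∀ q ∈ t.image p, ∀ r ∈ t.image p, q.Agree r := by
    simp only [Finset.mem_image]
    rintro _ ⟨i, hi, rfl⟩ _ ⟨j, hj, rfl⟩
    obtain rfl | hij := eq_or_ne i j
    · exact agree_refl _
    refine agree_of_restrict_eq (fun σ hσ => ?_) ((ht hi).2.trans (ht hj).2.symm)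
    rw [← hR i (ht hi).1 j (ht hj).1 hij]
    simpa using hσ
  exact ⟨amalgam _ hagree, fun i hi => amalgam_le hagree (Finset.mem_image_of_mem p hi)⟩

end QCond

theorem QCond_precaliber_omega1_general (lam : Cardinal) :
    (∀ p : Ordinal → QCond lam.ord,
      ∃ X : Set Ordinal, X ⊆ Set.Iio (Cardinal.aleph 1).ord ∧ ¬ X.Countable ∧
        ∀ t : Finset Ordinal, ↑t ⊆ X →
          ∃ q : QCond lam.ord, ∀ i ∈ t, QLE q (p i)) ∧
    (∀ A : Set (QCond lam.ord),
      (∀ p ∈ A, ∀ q ∈ A, p ≠ q → ¬ QCompat p q) → A.Countable) := by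
  refine ⟨fun p => QCond.exists_not_countable_centered p not_countable_Iio_aleph_one_ord,
    fun A hA => ?_⟩
  classical
  by_contra hAunc
  obtain ⟨X, hXA, hX, hcentered⟩ := QCond.exists_not_countable_centered id hAunc
  obtain ⟨p, hp, q, hq, hpq⟩ := not_subsingleton_iff.1 fun hsub => hX hsub.countable
  obtain ⟨r, hr⟩ := hcentered {p, q} (by simp [insert_subset_iff, hp, hq])
  exact hA p (hXA hp) q (hXA hq) hpq ⟨r, hr p (by simp), hr q (by simp)⟩

/-- The forcing `Q₀` (over a regular uncountable `lam`) has precaliber `ω₁`: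
among any `ω₁` many conditions there are uncountably many which are centered
(any finitely many of them have a common lower bound). In particular, `Q₀`
has the countable chain condition. -/
theorem QCond_precaliber_omega1 (lam : Cardinal) (hreg : lam.IsRegular)
    (hunc : Cardinal.aleph0 < lam) :
    (∀ p : Ordinal → QCond lam.ord,
      ∃ X : Set Ordinal, X ⊆ Set.Iio (Cardinal.aleph 1).ord ∧ ¬ X.Countable ∧
        ∀ t : Finset Ordinal, ↑t ⊆ X →
          ∃ q : QCond lam.ord, ∀ i ∈ t, QLE q (p i)) ∧
    (∀ A : Set (QCond lam.ord),
      (∀ p ∈ A, ∀ q ∈ A, p ≠ q → ¬ QCompat p q) → A.Countable) :=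
  QCond_precaliber_omega1_general lam
end

section
/- For every condition p ∈ Q₀ there exists a full condition q ∈ Q₀ with q ≤ p and dom(q) = dom(p); hence the set of full conditions is dense in Q₀. -/
/-- A condition `p ∈ Q₀` is full: there is `N` such that all the `s^p_σ` have
length exactly `N`, all values of the promises `f^p_σ`, `h^p_σ` are `< N`, and
the promises have the largest possible domains within `dom p`. -/
def QFull {Λ : Ordinal} (p : QCond Λ) : Prop :=
  ∃ N : ℕ, ∀ σ ∈ p.dom,
    (p.s σ).length = N ∧
    (∀ (τ : SeqLT Λ) (k : ℕ), p.f σ τ = some k → k < N) ∧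
    (∀ (τ : SeqLT Λ) (k : ℕ), p.h σ τ = some k → k < N) ∧
    (∀ τ ∈ p.dom, SeqSExt τ σ → (p.f σ τ).isSome) ∧
    (∀ τ ∈ p.dom, BlockLeft τ σ → (p.h σ τ).isSome)


/-- Auxiliary: `getD` of a replicated `false` list is `false`. -/
theorem getD_replicate_false (m n : ℕ) :
    (List.replicate m false).getD n false = false := by
  rcases Nat.lt_or_ge n m with h | h
  · rw [List.getD_eq_getElem _ _ (by simpa using h)]; simp
  · exact List.getD_eq_default _ _ (by simpa using h)

open Classical in
/-- Auxiliary: the fullification of a condition. -/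
noncomputable def QFullify {Λ : Ordinal} (p : QCond Λ) (N : ℕ) : QCond Λ where
  dom := p.dom
  dom_finite := p.dom_finite
  dom_succ := p.dom_succ
  s := fun σ => p.s σ ++ List.replicate (N - (p.s σ).length) false
  f := fun σ τ =>
    if σ ∈ p.dom ∧ τ ∈ p.dom ∧ SeqSExt τ σ then some ((p.f σ τ).getD ((p.s σ).length))
    else none
  h := fun σ τ =>
    if σ ∈ p.dom ∧ τ ∈ p.dom ∧ BlockLeft τ σ then some ((p.h σ τ).getD ((p.s σ).length))
    else none
  s_mono := by
    intro σ hσ τ hτ hst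
    simp only [List.length_append, List.length_replicate]
    have := p.s_mono σ hσ τ hτ hst
    omega
  f_dom := by
    intro σ hσ τ hsome
    by_cases hc : σ ∈ p.dom ∧ τ ∈ p.dom ∧ SeqSExt τ σ
    · exact hc.2
    · simp [hc] at hsome
  f_coh := by
    intro σ hσ τ k hk n hkn hnτ hnσ hτ0
    by_cases hc : σ ∈ p.dom ∧ τ ∈ p.dom ∧ SeqSExt τ σ
    · simp only [hc, if_true, Option.some.injEq] at hk
      by_cases hn : n < (p.s σ).length
      · have hnτ' : n < (p.s τ).length :=
          lt_of_lt_of_le hn (p.s_mono σ hc.1 τ hc.2.1 hc.2.2)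
        rw [List.getD_append _ _ _ _ hn]
        rw [List.getD_append _ _ _ _ hnτ'] at hτ0
        rcases hf : p.f σ τ with _ | k₀
        · simp [hf] at hk
          omega
        · have : k = k₀ := by simp [hf] at hk; omega
          exact p.f_coh σ hc.1 τ k₀ hf n (by omega) hnτ' hn hτ0
      · rw [List.getD_append_right _ _ _ _ (by omega)]
        exact getD_replicate_false _ _
    · simp [hc] at hk
  h_dom := by
    intro σ hσ τ hsome
    by_cases hc : σ ∈ p.dom ∧ τ ∈ p.dom ∧ BlockLeft τ σ
    · exact hc.2
    · simp [hc] at hsome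
  h_coh := by
    intro σ hσ τ k hk n hkn hnτ hnσ
    by_cases hc : σ ∈ p.dom ∧ τ ∈ p.dom ∧ BlockLeft τ σ
    · simp only [hc, if_true, Option.some.injEq] at hk
      by_cases hn : n < (p.s σ).length
      · by_cases hnτ' : n < (p.s τ).length
        · rcases hh : p.h σ τ with _ | k₀
          · simp [hh] at hk; omega
          · have hkk : k = k₀ := by simp [hh] at hk; omega
            rcases p.h_coh σ hc.1 τ k₀ hh n (by omega) hnτ' hn with h0 | h0
            · left; rw [List.getD_append _ _ _ _ hnτ']; exact h0
            · right; rw [List.getD_append _ _ _ _ hn]; exact h0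
        · left
          rw [List.getD_append_right _ _ _ _ (by omega)]
          exact getD_replicate_false _ _
      · right
        rw [List.getD_append_right _ _ _ _ (by omega)]
        exact getD_replicate_false _ _
    · simp [hc] at hk

/-- For every condition `p ∈ Q₀` there is a full condition `q ≤ p` with the
same domain; hence the set of full conditions is dense in `Q₀`. -/
theorem QCond_full_dense (lam : Cardinal) (hreg : lam.IsRegular)
    (hunc : Cardinal.aleph0 < lam) :
    (∀ p : QCond lam.ord, ∃ q : QCond lam.ord,
      QLE q p ∧ q.dom = p.dom ∧ QFull q) ∧
    (∀ p : QCond lam.ord, ∃ q : QCond lam.ord, QLE q p ∧ QFull q) := by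
  classical
  have main : ∀ p : QCond lam.ord, ∃ q : QCond lam.ord,
      QLE q p ∧ q.dom = p.dom ∧ QFull q := by
    intro p
    set D : Finset (SeqLT lam.ord) := p.dom_finite.toFinset with hD
    have hmemD : ∀ σ, σ ∈ D ↔ σ ∈ p.dom := by
      intro σ; simp [hD]
    set M : ℕ := D.sup (fun σ => (p.s σ).length) with hM
    set K : ℕ := D.sup (fun σ => D.sup (fun τ =>
      max ((p.f σ τ).getD 0) ((p.h σ τ).getD 0))) with hK
    set N : ℕ := max M K + 1 with hN
    have hMle : ∀ σ ∈ p.dom, (p.s σ).length ≤ M := by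
      intro σ hσ
      exact Finset.le_sup (f := fun σ => (p.s σ).length) ((hmemD σ).2 hσ)
    have hKf : ∀ σ ∈ p.dom, ∀ τ k, p.f σ τ = some k → k ≤ K := by
      intro σ hσ τ k hk
      have hτ : τ ∈ p.dom := (p.f_dom σ hσ τ (by simp [hk])).1
      have h1 : k ≤ max ((p.f σ τ).getD 0) ((p.h σ τ).getD 0) := by simp [hk]
      exact le_trans h1 (le_trans (Finset.le_sup (f := fun τ =>
        max ((p.f σ τ).getD 0) ((p.h σ τ).getD 0)) ((hmemD τ).2 hτ))
        (Finset.le_sup (f := fun σ => D.sup (fun τ =>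
          max ((p.f σ τ).getD 0) ((p.h σ τ).getD 0))) ((hmemD σ).2 hσ)))
    have hKh : ∀ σ ∈ p.dom, ∀ τ k, p.h σ τ = some k → k ≤ K := by
      intro σ hσ τ k hk
      have hτ : τ ∈ p.dom := (p.h_dom σ hσ τ (by simp [hk])).1
      have h1 : k ≤ max ((p.f σ τ).getD 0) ((p.h σ τ).getD 0) := by simp [hk]
      exact le_trans h1 (le_trans (Finset.le_sup (f := fun τ =>
        max ((p.f σ τ).getD 0) ((p.h σ τ).getD 0)) ((hmemD τ).2 hτ))
        (Finset.le_sup (f := fun σ => D.sup (fun τ =>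
          max ((p.f σ τ).getD 0) ((p.h σ τ).getD 0))) ((hmemD σ).2 hσ)))
    have hMN : M < N := Nat.lt_succ_of_le (le_max_left _ _)
    have hKN : K < N := Nat.lt_succ_of_le (le_max_right _ _)
    refine ⟨QFullify p N, ⟨fun σ hσ => hσ, ?_⟩, rfl, ⟨N, ?_⟩⟩
    · intro σ hσ
      refine ⟨⟨_, rfl⟩, ?_, ?_⟩
      · intro τ k hk
        have hτ := p.f_dom σ hσ τ (by simp [hk])
        refine ⟨k, le_refl k, ?_⟩
        show (if σ ∈ p.dom ∧ τ ∈ p.dom ∧ SeqSExt τ σ then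
          some ((p.f σ τ).getD (p.s σ).length) else none) = some k
        rw [if_pos ⟨hσ, hτ⟩, hk, Option.getD_some]
      · intro τ k hk
        have hτ := p.h_dom σ hσ τ (by simp [hk])
        refine ⟨k, le_refl k, ?_⟩
        show (if σ ∈ p.dom ∧ τ ∈ p.dom ∧ BlockLeft τ σ then
          some ((p.h σ τ).getD (p.s σ).length) else none) = some k
        rw [if_pos ⟨hσ, hτ⟩, hk, Option.getD_some]
    · intro σ hσ'
      have hσ : σ ∈ p.dom := hσ'
      have hlen : (p.s σ).length ≤ N := le_trans (hMle σ hσ) (le_of_lt hMN)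
      refine ⟨?_, ?_, ?_, ?_, ?_⟩
      · simp only [QFullify, List.length_append, List.length_replicate]
        omega
      · intro τ k hk
        by_cases hc : σ ∈ p.dom ∧ τ ∈ p.dom ∧ SeqSExt τ σ
        · simp only [QFullify, if_pos hc, Option.some.injEq] at hk
          have hkM : (p.s σ).length ≤ M := hMle σ hσ
          rcases hf : p.f σ τ with _ | k₀
          · simp [hf] at hk; omega
          · have := hKf σ hσ τ k₀ hf
            simp [hf] at hk; omega
        · simp [QFullify, hc] at hk
      · intro τ k hk
        by_cases hc : σ ∈ p.dom ∧ τ ∈ p.dom ∧ BlockLeft τ σ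
        · simp only [QFullify, if_pos hc, Option.some.injEq] at hk
          have hkM : (p.s σ).length ≤ M := hMle σ hσ
          rcases hf : p.h σ τ with _ | k₀
          · simp [hf] at hk; omega
          · have := hKh σ hσ τ k₀ hf
            simp [hf] at hk; omega
        · simp [QFullify, hc] at hk
      · intro τ hτ' hst
        have hτ : τ ∈ p.dom := hτ'
        simp [QFullify, hσ, hτ, hst]
      · intro τ hτ' hbl
        have hτ : τ ∈ p.dom := hτ'
        simp [QFullify, hσ, hτ, hbl]
  exact ⟨main, fun p => (main p).imp fun q hq => ⟨hq.1, hq.2.2⟩⟩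
end

section
/- For each σ ∈ S and each n ∈ ℕ, the set D_{σ,n} := {q ∈ Q₀ : σ ∈ dom(q) and there is m ≥ n with s^q_σ(m) = 1} is dense in Q₀; likewise the set {q ∈ Q₀ : σ ∈ dom(q) and |s^q_σ| ≥ n} is dense in Q₀. -/

private lemma seqExt_refl {L : Ordinal} (s : SeqLT L) : SeqExt s s :=
  ⟨le_rfl, fun _ _ => rfl⟩

private lemma seqExt_trans {L : Ordinal} {a b c : SeqLT L} (h1 : SeqExt a b)
    (h2 : SeqExt b c) : SeqExt a c :=
  ⟨h1.1.trans h2.1, fun x hx => (h2.2 x (lt_of_lt_of_le hx h1.1)).trans (h1.2 x hx)⟩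

private lemma seq_eq_of_ext {L : Ordinal} {t s' s : SeqLT L} (h1 : SeqExt t s)
    (h2 : SeqExt s' s) (hlen : t.len = s'.len) : t = s' := by
  have hv : t.val = s'.val := by
    funext x
    rcases lt_or_ge x t.len with h | h
    · rw [← h1.2 x h, ← h2.2 x (hlen ▸ h)]
    · rw [t.val_zero x h, s'.val_zero x (hlen ▸ h)]
  cases t; cases s'
  simp only at hlen hv
  subst hlen; subst hv
  rfl

/-- For each node `σ` of successor length and each `n`, the set of conditions
`q` with `σ ∈ dom q` and `s^q_σ(m) = 1` for some `m ≥ n` is dense in `Q₀`;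
likewise, the set of conditions `q` with `σ ∈ dom q` and `|s^q_σ| ≥ n` is
dense in `Q₀`. -/
theorem QCond_density (lam : Cardinal) (hreg : lam.IsRegular)
    (hunc : Cardinal.aleph0 < lam)
    (σ : SeqLT lam.ord) (hσ : IsSuccSeq σ) (n : ℕ) :
    (∀ p : QCond lam.ord, ∃ q : QCond lam.ord, QLE q p ∧ σ ∈ q.dom ∧
      ∃ m : ℕ, n ≤ m ∧ (q.s σ).getD m false = true) ∧
    (∀ p : QCond lam.ord, ∃ q : QCond lam.ord, QLE q p ∧ σ ∈ q.dom ∧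
      n ≤ (q.s σ).length) := by
  classical
  suffices H : ∀ p : QCond lam.ord, ∃ q : QCond lam.ord, QLE q p ∧ σ ∈ q.dom ∧
      (∃ m : ℕ, n ≤ m ∧ (q.s σ).getD m false = true) ∧ n ≤ (q.s σ).length by
    exact ⟨fun p => (H p).imp fun q hq => ⟨hq.1, hq.2.1, hq.2.2.1⟩,
      fun p => (H p).imp fun q hq => ⟨hq.1, hq.2.1, hq.2.2.2⟩⟩
  intro p
  set D : Set (SeqLT lam.ord) := insert σ p.dom with hD
  have hfin : D.Finite := p.dom_finite.insert σ
  set L : ℕ := max n (hfin.toFinset.sup fun t => (p.s t).length) with hLdef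
  have hL : ∀ t ∈ D, (p.s t).length ≤ L := fun t ht =>
    le_max_of_le_right (Finset.le_sup (f := fun t => (p.s t).length) (hfin.mem_toFinset.mpr ht))
  have hnL : n ≤ L := le_max_left _ _
  set pad : List Bool → List Bool :=
    fun l => l ++ List.replicate (L - l.length) false with hpad
  set news : SeqLT lam.ord → List Bool :=
    fun r => if SeqExt r σ then pad (p.s r) ++ [true] else pad (p.s r) with hnews
  have hpadlen : ∀ t ∈ D, (pad (p.s t)).length = L := by
    intro t ht
    have := hL t ht
    simp only [hpad, List.length_append, List.length_replicate]
    omega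
  have hprefix : ∀ r, p.s r <+: news r := by
    intro r
    have h1 : p.s r <+: pad (p.s r) := ⟨_, rfl⟩
    simp only [hnews]
    split
    · exact h1.trans (List.prefix_append _ _)
    · exact h1
  have hlen : ∀ t ∈ D, (news t).length = if SeqExt t σ then L + 1 else L := by
    intro t ht
    simp only [hnews]
    split
    · simp [hpadlen t ht]
    · exact hpadlen t ht
  have hgetD_lt : ∀ r, ∀ m < (p.s r).length,
      (news r).getD m false = (p.s r).getD m false := by
    intro r m hm
    obtain ⟨l, hl⟩ := hprefix r
    rw [← hl, List.getD_append _ _ _ _ hm]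
  have hgetD_L : ∀ t ∈ D, SeqExt t σ → (news t).getD L false = true := by
    intro t ht hext
    simp only [hnews, if_pos hext, List.getD_eq_getElem?_getD]
    rw [← hpadlen t ht, List.getElem?_concat_length]
    rfl
  have hgetD_true : ∀ t ∈ D, ∀ m, (news t).getD m false = true →
      (m < (p.s t).length ∧ (p.s t).getD m false = true) ∨ (m = L ∧ SeqExt t σ) := by
    intro t ht m hm
    rcases lt_or_ge m (p.s t).length with h | h
    · exact Or.inl ⟨h, by rwa [← hgetD_lt t m h]⟩
    · right
      rcases lt_or_ge m L with h2 | h2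
      · exfalso
        have hrep : (pad (p.s t)).getD m false = false := by
          simp only [hpad, List.getD_eq_getElem?_getD, List.getElem?_append_right h,
            List.getElem?_replicate]
          have : m - (p.s t).length < L - (p.s t).length := by omega
          simp [this]
        rw [List.getD_eq_getElem?_getD] at hrep
        simp only [hnews] at hm
        split at hm
        · rw [List.getD_eq_getElem?_getD,
            List.getElem?_append_left (by rw [hpadlen t ht]; omega)] at hm
          rw [hrep] at hm
          exact Bool.false_ne_true hm
        · rw [List.getD_eq_getElem?_getD, hrep] at hm
          exact Bool.false_ne_true hm
      · -- m ≥ L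
        by_cases hext : SeqExt t σ
        · refine ⟨?_, hext⟩
          by_contra hne
          have hmL : L + 1 ≤ m := by omega
          have : (news t).getD m false = false := by
            rw [List.getD_eq_getElem?_getD, List.getElem?_eq_none]
            · rfl
            · rw [hlen t ht, if_pos hext]; omega
          rw [this] at hm
          exact absurd hm Bool.false_ne_true
        · exfalso
          have : (news t).getD m false = false := by
            rw [List.getD_eq_getElem?_getD, List.getElem?_eq_none]
            · rfl
            · rw [hlen t ht, if_neg hext]; omega
          rw [this] at hm
          exact Bool.false_ne_true hm
  have hσD : σ ∈ D := Set.mem_insert _ _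
  have hsub : p.dom ⊆ D := Set.subset_insert _ _
  refine ⟨⟨D, hfin, ?_, news,
    (fun s' t => if s' ∈ p.dom then p.f s' t else none),
    (fun s' t => if s' ∈ p.dom then p.h s' t else none),
    ?_, ?_, ?_, ?_, ?_⟩, ⟨hsub, ?_⟩, hσD, ?_, ?_⟩
  · -- dom_succ
    rintro s' (rfl | hs')
    · exact hσ
    · exact p.dom_succ s' hs'
  · -- s_mono
    intro s' hs' t ht hst
    rw [hlen s' hs', hlen t ht]
    split
    · rw [if_pos (seqExt_trans hst.1 (by assumption))]
    · split <;> omega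
  · -- f_dom
    intro s' hs' t hsome
    by_cases h : s' ∈ p.dom
    · simp only [if_pos h] at hsome
      obtain ⟨h1, h2⟩ := p.f_dom s' h t hsome
      exact ⟨hsub h1, h2⟩
    · simp only [if_neg h] at hsome; simp at hsome
  · -- f_coh
    intro s' hs' t k hk m hkm hmt hms htf
    by_cases h : s' ∈ p.dom
    · simp only [if_pos h] at hk
      obtain ⟨htd, htlt⟩ := p.f_dom s' h t (by rw [hk]; rfl)
      by_contra hcon
      have hst : (news s').getD m false = true := by
        cases hb : (news s').getD m false
        · exact absurd hb hcon
        · rfl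
      rcases hgetD_true s' hs' m hst with ⟨hm1, hm2⟩ | ⟨rfl, hext⟩
      · -- old position
        have hmt' : m < (p.s t).length := lt_of_lt_of_le hm1 (p.s_mono s' h t htd htlt)
        have := p.f_coh s' h t k hk m hkm hmt' hm1
        rw [hgetD_lt t m hmt'] at htf
        rw [hgetD_lt s' m hm1] at hcon
        have := this htf
        rw [this] at hm2
        exact absurd hm2 (by simp)
      · -- m = L, s' extends into σ
        have htext : SeqExt t σ := by
          by_contra hne
          rw [hlen t (hsub htd), if_neg hne] at hmt
          omega
        rw [hgetD_L t (hsub htd) htext] at htf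
        exact absurd htf (by simp)
    · simp only [if_neg h] at hk; simp at hk
  · -- h_dom
    intro s' hs' t hsome
    by_cases h : s' ∈ p.dom
    · simp only [if_pos h] at hsome
      obtain ⟨h1, h2⟩ := p.h_dom s' h t hsome
      exact ⟨hsub h1, h2⟩
    · simp only [if_neg h] at hsome; simp at hsome
  · -- h_coh
    intro s' hs' t k hk m hkm hmt hms
    by_cases h : s' ∈ p.dom
    · simp only [if_pos h] at hk
      obtain ⟨htd, htbl⟩ := p.h_dom s' h t (by rw [hk]; rfl)
      by_contra hcon
      push_neg at hcon
      obtain ⟨hc1, hc2⟩ := hcon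
      have ht1 : (news t).getD m false = true := by
        cases hb : (news t).getD m false
        · exact absurd hb hc1
        · rfl
      have hs1 : (news s').getD m false = true := by
        cases hb : (news s').getD m false
        · exact absurd hb hc2
        · rfl
      rcases hgetD_true t (hsub htd) m ht1 with ⟨ha1, ha2⟩ | ⟨haL, haext⟩ <;>
        rcases hgetD_true s' hs' m hs1 with ⟨hb1, hb2⟩ | ⟨hbL, hbext⟩
      · have := p.h_coh s' h t k hk m hkm ha1 hb1
        rcases this with h' | h'
        · rw [h'] at ha2; exact absurd ha2 (by simp)
        · rw [h'] at hb2; exact absurd hb2 (by simp)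
      · subst hbL
        exact absurd (hL t (hsub htd)) (by omega)
      · subst haL
        exact absurd (hL s' hs') (by omega)
      · -- both extend σ: contradiction with BlockLeft
        obtain ⟨d, hd1, hd2, _, hd4⟩ := htbl
        have : t = s' := seq_eq_of_ext haext hbext (by rw [hd1, hd2])
        rw [this] at hd4
        exact absurd hd4 (lt_irrefl _)
    · simp only [if_neg h] at hk; simp at hk
  · -- QLE second component
    intro s' hs'
    refine ⟨hprefix s', ?_, ?_⟩
    · intro t k hk
      exact ⟨k, le_rfl, by simp only [if_pos hs']; exact hk⟩
    · intro t k hk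
      exact ⟨k, le_rfl, by simp only [if_pos hs']; exact hk⟩
  · -- the density witness
    exact ⟨L, hnL, hgetD_L σ hσD (seqExt_refl σ)⟩
  · -- length
    simp only [hlen σ hσD, if_pos (seqExt_refl σ)]
    omega
end
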